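/- arXiv:1709.08088 — 4 statements merged into one kernel-verified Lean document; each statement's English description precedes it below -/
import Mathlib

section
/- Let R be a secondary structure on {1,…,m}. Suppose some arc a of R has at least two child arcs and at least one unpaired child. Then R is not designable under the Watson–Crick model. -/
inductive Base : Type
  | A | U | G | C
  deriving DecidableEq

open Base

/-- A (pseudoknot-free) secondary structure on positions `{1,…,m}`:
arcs `(i,j)` with `1 ≤ i < j ≤ m`, no two arcs sharing an endpoint, no crossings. -/
def IsSecStruct (m : ℕ) (R : Finset (ℕ × ℕ)) : Prop :=
  (∀ a ∈ R, 1 ≤ a.1 ∧ a.1 < a.2 ∧ a.2 ≤ m) ∧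
  (∀ a ∈ R, ∀ b ∈ R, a ≠ b → a.1 ≠ b.1 ∧ a.1 ≠ b.2 ∧ a.2 ≠ b.1 ∧ a.2 ≠ b.2) ∧
  (∀ a ∈ R, ∀ b ∈ R, ¬(a.1 < b.1 ∧ b.1 < a.2 ∧ a.2 < b.2))

/-- Watson–Crick pairing: `{x,y} = {G,C}` or `{x,y} = {A,U}`. -/
def WCMatch (x y : Base) : Prop :=
  (x = G ∧ y = C) ∨ (x = C ∧ y = G) ∨ (x = A ∧ y = U) ∨ (x = U ∧ y = A)

/-- An arc set for the sequence `S` under the Watson–Crick model. -/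
def IsArcSet (m : ℕ) (S : ℕ → Base) (R : Finset (ℕ × ℕ)) : Prop :=
  IsSecStruct m R ∧ ∀ a ∈ R, WCMatch (S a.1) (S a.2)

/-- A maximum-size arc set for `S` under the Watson–Crick model. -/
def IsMaxArcSet (m : ℕ) (S : ℕ → Base) (R : Finset (ℕ × ℕ)) : Prop :=
  IsArcSet m S R ∧ ∀ R' : Finset (ℕ × ℕ), IsArcSet m S R' → R'.card ≤ R.card

/-- `S` is a design: it admits a unique maximum-size arc set. -/
def IsDesign (m : ℕ) (S : ℕ → Base) : Prop :=
  ∃! R : Finset (ℕ × ℕ), IsMaxArcSet m S R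

/-- `R` is designable: some design `S` has `R` as its unique maximum-size arc set. -/
def Designable (m : ℕ) (R : Finset (ℕ × ℕ)) : Prop :=
  ∃ S : ℕ → Base, IsMaxArcSet m S R ∧ ∀ R' : Finset (ℕ × ℕ), IsMaxArcSet m S R' → R' = R
/-- Arc `b` is nested inside arc `a`. -/
def Nested (a b : ℕ × ℕ) : Prop := a.1 < b.1 ∧ b.2 < a.2

/-- `b` is a child arc of `a` in `R`: `b ∈ R`, `b` nested inside `a`, and `b` is not
nested inside any arc of `R` that is itself nested inside `a`. -/
def IsChildArc (R : Finset (ℕ × ℕ)) (a b : ℕ × ℕ) : Prop :=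
  b ∈ R ∧ Nested a b ∧ ¬∃ c ∈ R, Nested a c ∧ Nested c b

/-- Compatibility of a new arc `e` with an old arc `c`. -/
def OkP (e c : ℕ × ℕ) : Prop :=
  (e.1 ≠ c.1 ∧ e.1 ≠ c.2 ∧ e.2 ≠ c.1 ∧ e.2 ≠ c.2) ∧
  ¬(e.1 < c.1 ∧ c.1 < e.2 ∧ e.2 < c.2) ∧
  ¬(c.1 < e.1 ∧ e.1 < c.2 ∧ c.2 < e.2)

lemma cls_a (a1 a2 c1 c2 : ℕ) (oa : a1 < a2) (hclt : c1 < c2)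
    (d : a1 ≠ c1 ∧ a1 ≠ c2 ∧ a2 ≠ c1 ∧ a2 ≠ c2)
    (n1 : ¬(a1 < c1 ∧ c1 < a2 ∧ a2 < c2)) (n2 : ¬(c1 < a1 ∧ a1 < c2 ∧ c2 < a2)) :
    (c2 < a1 ∨ a2 < c1 ∨ (c1 < a1 ∧ a2 < c2)) ∨ (a1 < c1 ∧ c2 < a2) := by omega

lemma cls_b (b1 b2 c1 c2 : ℕ) (ob : b1 < b2) (hclt : c1 < c2)
    (d : b1 ≠ c1 ∧ b1 ≠ c2 ∧ b2 ≠ c1 ∧ b2 ≠ c2)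
    (n3 : ¬(b1 < c1 ∧ c1 < b2 ∧ b2 < c2)) (n4 : ¬(c1 < b1 ∧ b1 < c2 ∧ c2 < b2))
    (m1 : ¬(c1 < b1 ∧ b2 < c2)) :
    c2 < b1 ∨ (b1 < c1 ∧ c2 < b2) ∨ b2 < c1 := by omega

lemma cls_p (p c1 c2 : ℕ) (hu : p ≠ c1 ∧ p ≠ c2) (m3 : ¬(c1 < p ∧ p < c2)) :
    c2 < p ∨ p < c1 := by omega

lemma okp_child (a1 a2 p q : ℕ) (b c : ℕ × ℕ)
    (o1 : a1 < b.1) (o2 : b.1 < b.2) (o3 : b.2 < a2) (hp1 : a1 < p) (hp2 : p < a2)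
    (hpb : p < b.1 ∨ b.2 < p) (hq : q = b.1 ∨ q = b.2)
    (hcl : (c.2 < a1 ∨ a2 < c.1 ∨ (c.1 < a1 ∧ a2 < c.2)) ∨
      (a1 < c.1 ∧ c.2 < a2 ∧ (c.2 < p ∨ p < c.1) ∧
        (c.2 < b.1 ∨ (b.1 < c.1 ∧ c.2 < b.2) ∨ b.2 < c.1)))
    (h2 : p ≠ c.1 ∧ p ≠ c.2)
    (h3 : b.1 ≠ c.1 ∧ b.1 ≠ c.2 ∧ b.2 ≠ c.1 ∧ b.2 ≠ c.2) :
    OkP (min p q, max p q) c := by unfold OkP; dsimp; omega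

lemma okp_child_a (a1 a2 p q : ℕ) (b : ℕ × ℕ)
    (o1 : a1 < b.1) (o2 : b.1 < b.2) (o3 : b.2 < a2) (hp1 : a1 < p) (hp2 : p < a2)
    (hpb : p < b.1 ∨ b.2 < p) (hq : q = b.1 ∨ q = b.2) :
    OkP (min p q, max p q) (a1, a2) := by unfold OkP; dsimp; omega

lemma okp_parentL (p : ℕ) (a c : ℕ × ℕ) (oa : a.1 < a.2) (hp1 : a.1 < p) (hp2 : p < a.2)
    (hcl : (c.2 < a.1 ∨ a.2 < c.1 ∨ (c.1 < a.1 ∧ a.2 < c.2)) ∨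
      (a.1 < c.1 ∧ c.2 < a.2 ∧ (c.2 < p ∨ p < c.1)))
    (hu : p ≠ c.1 ∧ p ≠ c.2) (hd : a.1 ≠ c.1 ∧ a.1 ≠ c.2 ∧ a.2 ≠ c.1 ∧ a.2 ≠ c.2) :
    OkP (a.1, p) c := by unfold OkP; dsimp; omega

lemma okp_parentR (p : ℕ) (a c : ℕ × ℕ) (oa : a.1 < a.2) (hp1 : a.1 < p) (hp2 : p < a.2)
    (hcl : (c.2 < a.1 ∨ a.2 < c.1 ∨ (c.1 < a.1 ∧ a.2 < c.2)) ∨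
      (a.1 < c.1 ∧ c.2 < a.2 ∧ (c.2 < p ∨ p < c.1)))
    (hu : p ≠ c.1 ∧ p ≠ c.2) (hd : a.1 ≠ c.1 ∧ a.1 ≠ c.2 ∧ a.2 ≠ c.1 ∧ a.2 ≠ c.2) :
    OkP (p, a.2) c := by unfold OkP; dsimp; omega

lemma okp_E2a (p : ℕ) (a b c : ℕ × ℕ)
    (o1 : a.1 < b.1) (o2 : b.1 < b.2) (o3 : b.2 < a.2)
    (hcl : (c.2 < a.1 ∨ a.2 < c.1 ∨ (c.1 < a.1 ∧ a.2 < c.2)) ∨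
      (a.1 < c.1 ∧ c.2 < a.2 ∧ (c.2 < p ∨ p < c.1) ∧
        (c.2 < b.1 ∨ (b.1 < c.1 ∧ c.2 < b.2) ∨ b.2 < c.1)))
    (hd1 : a.1 ≠ c.1 ∧ a.1 ≠ c.2 ∧ a.2 ≠ c.1 ∧ a.2 ≠ c.2)
    (hd2 : b.1 ≠ c.1 ∧ b.1 ≠ c.2 ∧ b.2 ≠ c.1 ∧ b.2 ≠ c.2) :
    OkP (a.1, b.1) c := by unfold OkP; dsimp; omega

lemma okp_E2b (p : ℕ) (a b c : ℕ × ℕ)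
    (o1 : a.1 < b.1) (o2 : b.1 < b.2) (o3 : b.2 < a.2)
    (hcl : (c.2 < a.1 ∨ a.2 < c.1 ∨ (c.1 < a.1 ∧ a.2 < c.2)) ∨
      (a.1 < c.1 ∧ c.2 < a.2 ∧ (c.2 < p ∨ p < c.1) ∧
        (c.2 < b.1 ∨ (b.1 < c.1 ∧ c.2 < b.2) ∨ b.2 < c.1)))
    (hd1 : a.1 ≠ c.1 ∧ a.1 ≠ c.2 ∧ a.2 ≠ c.1 ∧ a.2 ≠ c.2)
    (hd2 : b.1 ≠ c.1 ∧ b.1 ≠ c.2 ∧ b.2 ≠ c.1 ∧ b.2 ≠ c.2) :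
    OkP (b.2, a.2) c := by unfold OkP; dsimp; omega

lemma okp_E3a (p : ℕ) (a b₁ b₂ c : ℕ × ℕ)
    (o11 : a.1 < b₁.1) (o12 : b₁.1 < b₁.2) (o13 : b₁.2 < a.2)
    (o21 : a.1 < b₂.1) (o22 : b₂.1 < b₂.2) (o23 : b₂.2 < a.2) (hord : b₁.2 < b₂.1)
    (hcl : (c.2 < a.1 ∨ a.2 < c.1 ∨ (c.1 < a.1 ∧ a.2 < c.2)) ∨
      (a.1 < c.1 ∧ c.2 < a.2 ∧ (c.2 < p ∨ p < c.1) ∧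
        (c.2 < b₁.1 ∨ (b₁.1 < c.1 ∧ c.2 < b₁.2) ∨ b₁.2 < c.1) ∧
        (c.2 < b₂.1 ∨ (b₂.1 < c.1 ∧ c.2 < b₂.2) ∨ b₂.2 < c.1)))
    (hd2 : b₁.1 ≠ c.1 ∧ b₁.1 ≠ c.2 ∧ b₁.2 ≠ c.1 ∧ b₁.2 ≠ c.2)
    (hd3 : b₂.1 ≠ c.1 ∧ b₂.1 ≠ c.2 ∧ b₂.2 ≠ c.1 ∧ b₂.2 ≠ c.2) :
    OkP (b₁.1, b₂.2) c := by unfold OkP; dsimp; omega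

lemma okp_E3b (p : ℕ) (a b₁ b₂ c : ℕ × ℕ)
    (o11 : a.1 < b₁.1) (o12 : b₁.1 < b₁.2) (o13 : b₁.2 < a.2)
    (o21 : a.1 < b₂.1) (o22 : b₂.1 < b₂.2) (o23 : b₂.2 < a.2) (hord : b₁.2 < b₂.1)
    (hcl : (c.2 < a.1 ∨ a.2 < c.1 ∨ (c.1 < a.1 ∧ a.2 < c.2)) ∨
      (a.1 < c.1 ∧ c.2 < a.2 ∧ (c.2 < p ∨ p < c.1) ∧
        (c.2 < b₁.1 ∨ (b₁.1 < c.1 ∧ c.2 < b₁.2) ∨ b₁.2 < c.1) ∧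
        (c.2 < b₂.1 ∨ (b₂.1 < c.1 ∧ c.2 < b₂.2) ∨ b₂.2 < c.1)))
    (hd2 : b₁.1 ≠ c.1 ∧ b₁.1 ≠ c.2 ∧ b₁.2 ≠ c.1 ∧ b₁.2 ≠ c.2)
    (hd3 : b₂.1 ≠ c.1 ∧ b₂.1 ≠ c.2 ∧ b₂.2 ≠ c.1 ∧ b₂.2 ≠ c.2) :
    OkP (b₁.2, b₂.1) c := by unfold OkP; dsimp; omega

lemma okp_E3aa (a b₁ b₂ : ℕ × ℕ)
    (o11 : a.1 < b₁.1) (o12 : b₁.1 < b₁.2) (o13 : b₁.2 < a.2)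
    (o21 : a.1 < b₂.1) (o22 : b₂.1 < b₂.2) (o23 : b₂.2 < a.2) (hord : b₁.2 < b₂.1) :
    OkP (b₁.1, b₂.2) a ∧ OkP (b₁.2, b₂.1) a := by
  constructor <;> (unfold OkP; omega)

lemma okp_parent_b (p : ℕ) (a b : ℕ × ℕ) (o1 : a.1 < b.1) (o2 : b.1 < b.2) (o3 : b.2 < a.2)
    (hp1 : a.1 < p) (hp2 : p < a.2) (hpb : p < b.1 ∨ b.2 < p)
    (hub : p ≠ b.1 ∧ p ≠ b.2) :
    OkP (a.1, p) b ∧ OkP (p, a.2) b := by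
  constructor <;> (unfold OkP; dsimp; omega)

lemma okp_pair_E2 (a b : ℕ × ℕ) (o1 : a.1 < b.1) (o2 : b.1 < b.2) (o3 : b.2 < a.2) :
    OkP (a.1, b.1) (b.2, a.2) := by unfold OkP; dsimp; omega

lemma okp_pair_E3 (b₁ b₂ : ℕ × ℕ) (o12 : b₁.1 < b₁.2) (o22 : b₂.1 < b₂.2)
    (hord : b₁.2 < b₂.1) :
    OkP (b₁.1, b₂.2) (b₁.2, b₂.1) := by unfold OkP; dsimp; omega

lemma cls_twin (a1 a2 u1 u2 v1 v2 p : ℕ) (g1 : a1 < v1) (g2 : v1 < v2) (g3 : v2 < a2)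
    (hdisj : u2 < v1 ∨ v2 < u1) (hpv : p < v1 ∨ v2 < p) :
    a1 < v1 ∧ v2 < a2 ∧ (v2 < p ∨ p < v1) ∧
      (v2 < u1 ∨ (u1 < v1 ∧ v2 < u2) ∨ u2 < v1) := by omega

instance : Fintype Base :=
  { elems := {Base.A, Base.U, Base.G, Base.C}, complete := fun x => by cases x <;> simp }

instance : DecidableRel WCMatch := fun x y => by unfold WCMatch; infer_instance

lemma wc_symm {x y : Base} (h : WCMatch x y) : WCMatch y x := by
  unfold WCMatch at *; tauto

theorem key_base : ∀ sp si sj s2 s3 s4 s5 : Base,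
    WCMatch si sj → WCMatch s2 s3 → WCMatch s4 s5 →
    WCMatch sp si ∨ WCMatch sp sj ∨ WCMatch sp s2 ∨ WCMatch sp s3 ∨ WCMatch sp s4 ∨
      WCMatch sp s5 ∨ (WCMatch si s2 ∧ WCMatch s3 sj) ∨ (WCMatch si s4 ∧ WCMatch s5 sj) ∨
      (WCMatch s2 s5 ∧ WCMatch s3 s4) := by decide

lemma okp_dist {e c : ℕ × ℕ} (h : OkP e c) :
    c.1 ≠ e.1 ∧ c.1 ≠ e.2 ∧ c.2 ≠ e.1 ∧ c.2 ≠ e.2 :=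
  ⟨h.1.1.symm, h.1.2.2.1.symm, h.1.2.1.symm, h.1.2.2.2.symm⟩

/-- Single swap engine: removing one arc and adding one new compatible arc yields a
different maximum arc set, contradicting uniqueness. -/
lemma swap1 {m : ℕ} {S : ℕ → Base} {R : Finset (ℕ × ℕ)}
    (hmax : IsMaxArcSet m S R) (huni : ∀ R', IsMaxArcSet m S R' → R' = R)
    (t e : ℕ × ℕ) (ht : t ∈ R) (hbd : 1 ≤ e.1 ∧ e.1 < e.2 ∧ e.2 ≤ m)
    (hwc : WCMatch (S e.1) (S e.2)) (heR : e ∉ R)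
    (hok : ∀ c ∈ R, c ≠ t → OkP e c) : False := by
  set R' := insert e (R.erase t) with hR'
  have hmem : ∀ c ∈ R', c = e ∨ (c ∈ R ∧ c ≠ t) := by
    intro c hc
    rcases Finset.mem_insert.mp hc with h | h
    · exact Or.inl h
    · exact Or.inr ⟨Finset.mem_of_mem_erase h, (Finset.mem_erase.mp h).1⟩
  have harc : IsArcSet m S R' := by
    refine ⟨⟨?_, ?_, ?_⟩, ?_⟩
    · intro c hc
      rcases hmem c hc with h | ⟨h, _⟩
      · subst h; exact hbd
      · exact hmax.1.1.1 c h
    · intro c hc d hd hcd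
      rcases hmem c hc with h | ⟨h, h'⟩ <;> rcases hmem d hd with g | ⟨g, g'⟩
      · exact absurd (h.trans g.symm) hcd
      · subst h; exact (hok d g g').1
      · subst g; exact okp_dist (hok c h h')
      · exact hmax.1.1.2.1 c h d g hcd
    · intro c hc d hd
      rcases hmem c hc with h | ⟨h, h'⟩ <;> rcases hmem d hd with g | ⟨g, g'⟩
      · subst h g; omega
      · subst h; exact (hok d g g').2.1
      · subst g; exact (hok c h h').2.2
      · exact hmax.1.1.2.2 c h d g
    · intro c hc
      rcases hmem c hc with h | ⟨h, _⟩
      · subst h; exact hwc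
      · exact hmax.1.2 c h
  have hcard : R'.card = R.card := by
    have h1 : e ∉ R.erase t := fun h => heR (Finset.mem_of_mem_erase h)
    have h2 : 1 ≤ R.card := Finset.card_pos.mpr ⟨t, ht⟩
    rw [hR', Finset.card_insert_of_notMem h1, Finset.card_erase_of_mem ht]
    omega
  have heq : R' = R := huni R' ⟨harc, fun R'' h => hcard ▸ hmax.2 R'' h⟩
  exact heR (heq ▸ Finset.mem_insert_self e (R.erase t))

/-- Double swap engine: removing two arcs and adding two new compatible arcs. -/
lemma swap2 {m : ℕ} {S : ℕ → Base} {R : Finset (ℕ × ℕ)}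
    (hmax : IsMaxArcSet m S R) (huni : ∀ R', IsMaxArcSet m S R' → R' = R)
    (t₁ t₂ e₁ e₂ : ℕ × ℕ) (ht₁ : t₁ ∈ R) (ht₂ : t₂ ∈ R) (htt : t₁ ≠ t₂)
    (hbd₁ : 1 ≤ e₁.1 ∧ e₁.1 < e₁.2 ∧ e₁.2 ≤ m)
    (hbd₂ : 1 ≤ e₂.1 ∧ e₂.1 < e₂.2 ∧ e₂.2 ≤ m)
    (hw₁ : WCMatch (S e₁.1) (S e₁.2)) (hw₂ : WCMatch (S e₂.1) (S e₂.2))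
    (he₁ : e₁ ∉ R) (he₂ : e₂ ∉ R) (hee : e₁ ≠ e₂)
    (hpair : OkP e₁ e₂)
    (hok : ∀ c ∈ R, c ≠ t₁ → c ≠ t₂ → OkP e₁ c ∧ OkP e₂ c) : False := by
  set R' := insert e₁ (insert e₂ ((R.erase t₁).erase t₂)) with hR'
  have hmem : ∀ c ∈ R', c = e₁ ∨ c = e₂ ∨ (c ∈ R ∧ c ≠ t₁ ∧ c ≠ t₂) := by
    intro c hc
    rcases Finset.mem_insert.mp hc with h | h
    · exact Or.inl h
    rcases Finset.mem_insert.mp h with h | h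
    · exact Or.inr (Or.inl h)
    have h1 := Finset.mem_erase.mp h
    have h2 := Finset.mem_erase.mp h1.2
    exact Or.inr (Or.inr ⟨h2.2, h2.1, h1.1⟩)
  have hpair' : OkP e₂ e₁ := ⟨okp_dist hpair, hpair.2.2, hpair.2.1⟩
  have harc : IsArcSet m S R' := by
    refine ⟨⟨?_, ?_, ?_⟩, ?_⟩
    · intro c hc
      rcases hmem c hc with h | h | ⟨h, _⟩
      · subst h; exact hbd₁
      · subst h; exact hbd₂
      · exact hmax.1.1.1 c h
    · intro c hc d hd hcd
      rcases hmem c hc with h | h | ⟨h, h', h''⟩ <;>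
        rcases hmem d hd with g | g | ⟨g, g', g''⟩
      · exact absurd (h.trans g.symm) hcd
      · subst h g; exact hpair.1
      · subst h; exact ((hok d g g' g'').1).1
      · subst h g; exact hpair'.1
      · exact absurd (h.trans g.symm) hcd
      · subst h; exact ((hok d g g' g'').2).1
      · subst g; exact okp_dist (hok c h h' h'').1
      · subst g; exact okp_dist (hok c h h' h'').2
      · exact hmax.1.1.2.1 c h d g hcd
    · intro c hc d hd
      rcases hmem c hc with h | h | ⟨h, h', h''⟩ <;>
        rcases hmem d hd with g | g | ⟨g, g', g''⟩
      · subst h g; omega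
      · subst h g; exact hpair.2.1
      · subst h; exact ((hok d g g' g'').1).2.1
      · subst h g; exact hpair'.2.1
      · subst h g; omega
      · subst h; exact ((hok d g g' g'').2).2.1
      · subst g; exact ((hok c h h' h'').1).2.2
      · subst g; exact ((hok c h h' h'').2).2.2
      · exact hmax.1.1.2.2 c h d g
    · intro c hc
      rcases hmem c hc with h | h | ⟨h, _⟩
      · subst h; exact hw₁
      · subst h; exact hw₂
      · exact hmax.1.2 c h
  have hcard : R'.card = R.card := by
    have m2 : t₂ ∈ R.erase t₁ := Finset.mem_erase.mpr ⟨Ne.symm htt, ht₂⟩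
    have hn2 : e₂ ∉ (R.erase t₁).erase t₂ :=
      fun h => he₂ (Finset.mem_of_mem_erase (Finset.mem_of_mem_erase h))
    have hn1 : e₁ ∉ insert e₂ ((R.erase t₁).erase t₂) := by
      intro h
      rcases Finset.mem_insert.mp h with h | h
      · exact hee h
      · exact he₁ (Finset.mem_of_mem_erase (Finset.mem_of_mem_erase h))
    have h2 : 2 ≤ R.card := Finset.one_lt_card.mpr ⟨t₁, ht₁, t₂, ht₂, htt⟩
    rw [hR', Finset.card_insert_of_notMem hn1, Finset.card_insert_of_notMem hn2,
      Finset.card_erase_of_mem m2, Finset.card_erase_of_mem ht₁]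
    omega
  have heq : R' = R := huni R' ⟨harc, fun R'' h => hcard ▸ hmax.2 R'' h⟩
  exact he₁ (heq ▸ Finset.mem_insert_self e₁ _)


set_option maxHeartbeats 1000000 in
theorem aux_not_designable (m : ℕ) (R : Finset (ℕ × ℕ))
    (hR : IsSecStruct m R) (a : ℕ × ℕ) (ha : a ∈ R)
    (b₁ b₂ : ℕ × ℕ)
    (hc₁ : IsChildArc R a b₁) (hc₂ : IsChildArc R a b₂) (hord : b₁.2 < b₂.1)
    (p : ℕ) (hp₁ : a.1 < p) (hp₂ : p < a.2)
    (hunp : ∀ b ∈ R, p ≠ b.1 ∧ p ≠ b.2)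
    (hnotenc : ¬∃ b ∈ R, Nested a b ∧ b.1 < p ∧ p < b.2) :
    ¬Designable m R := by
  rintro ⟨S, hmax, huni⟩
  obtain ⟨hb₁R, hn₁, hnc₁⟩ := hc₁
  obtain ⟨hb₂R, hn₂, hnc₂⟩ := hc₂
  obtain ⟨oa1, oa, oam⟩ := hR.1 a ha
  obtain ⟨_, o12, _⟩ := hR.1 b₁ hb₁R
  obtain ⟨_, o22, _⟩ := hR.1 b₂ hb₂R
  have o11 : a.1 < b₁.1 := hn₁.1
  have o13 : b₁.2 < a.2 := hn₁.2
  have o21 : a.1 < b₂.1 := hn₂.1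
  have o23 : b₂.2 < a.2 := hn₂.2
  have hab₁ : a ≠ b₁ := by intro h; rw [h] at o11; omega
  have hab₂ : a ≠ b₂ := by intro h; rw [h] at o21; omega
  have hpb₁ : p < b₁.1 ∨ b₁.2 < p := by
    have hu1 := hunp b₁ hb₁R
    have h2 : ¬(b₁.1 < p ∧ p < b₁.2) := fun ⟨u, v⟩ => hnotenc ⟨b₁, hb₁R, hn₁, u, v⟩
    omega
  have hpb₂ : p < b₂.1 ∨ b₂.2 < p := by
    have hu2 := hunp b₂ hb₂R
    have h2 : ¬(b₂.1 < p ∧ p < b₂.2) := fun ⟨u, v⟩ => hnotenc ⟨b₂, hb₂R, hn₂, u, v⟩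
    omega
  -- classification of an arbitrary other arc
  have hcls : ∀ c ∈ R, c ≠ a → c ≠ b₁ → c ≠ b₂ →
      ((c.2 < a.1 ∨ a.2 < c.1 ∨ (c.1 < a.1 ∧ a.2 < c.2)) ∨
       (a.1 < c.1 ∧ c.2 < a.2 ∧ (c.2 < p ∨ p < c.1) ∧
        (c.2 < b₁.1 ∨ (b₁.1 < c.1 ∧ c.2 < b₁.2) ∨ b₁.2 < c.1) ∧
        (c.2 < b₂.1 ∨ (b₂.1 < c.1 ∧ c.2 < b₂.2) ∨ b₂.2 < c.1))) := by
    intro c hc hca hcb1 hcb2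
    obtain ⟨_, hclt, _⟩ := hR.1 c hc
    have hA := cls_a a.1 a.2 c.1 c.2 oa hclt (hR.2.1 a ha c hc (Ne.symm hca))
      (hR.2.2 a ha c hc) (hR.2.2 c hc a ha)
    rcases hA with h | ⟨h1, h2⟩
    · exact Or.inl h
    · refine Or.inr ⟨h1, h2, ?_, ?_, ?_⟩
      · exact cls_p p c.1 c.2 (hunp c hc)
          (fun ⟨w, x⟩ => hnotenc ⟨c, hc, ⟨h1, h2⟩, w, x⟩)
      · exact cls_b b₁.1 b₁.2 c.1 c.2 o12 hclt (hR.2.1 b₁ hb₁R c hc (Ne.symm hcb1))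
          (hR.2.2 b₁ hb₁R c hc) (hR.2.2 c hc b₁ hb₁R)
          (fun ⟨w, x⟩ => hnc₁ ⟨c, hc, ⟨h1, h2⟩, ⟨w, x⟩⟩)
      · exact cls_b b₂.1 b₂.2 c.1 c.2 o22 hclt (hR.2.1 b₂ hb₂R c hc (Ne.symm hcb2))
          (hR.2.2 b₂ hb₂R c hc) (hR.2.2 c hc b₂ hb₂R)
          (fun ⟨w, x⟩ => hnc₂ ⟨c, hc, ⟨h1, h2⟩, ⟨w, x⟩⟩)
  -- classification relative to a single child
  have hcls1 : ∀ c ∈ R, c ≠ a → c ≠ b₁ →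
      ((c.2 < a.1 ∨ a.2 < c.1 ∨ (c.1 < a.1 ∧ a.2 < c.2)) ∨
       (a.1 < c.1 ∧ c.2 < a.2 ∧ (c.2 < p ∨ p < c.1) ∧
        (c.2 < b₁.1 ∨ (b₁.1 < c.1 ∧ c.2 < b₁.2) ∨ b₁.2 < c.1))) := by
    intro c hc h1 h2
    by_cases h3 : c = b₂
    · rw [h3]
      exact Or.inr (cls_twin a.1 a.2 b₁.1 b₁.2 b₂.1 b₂.2 p o21 o22 o23 (Or.inl hord) hpb₂)
    · exact (hcls c hc h1 h2 h3).imp id fun ⟨u, v, w, x, _⟩ => ⟨u, v, w, x⟩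
  have hcls2 : ∀ c ∈ R, c ≠ a → c ≠ b₂ →
      ((c.2 < a.1 ∨ a.2 < c.1 ∨ (c.1 < a.1 ∧ a.2 < c.2)) ∨
       (a.1 < c.1 ∧ c.2 < a.2 ∧ (c.2 < p ∨ p < c.1) ∧
        (c.2 < b₂.1 ∨ (b₂.1 < c.1 ∧ c.2 < b₂.2) ∨ b₂.2 < c.1))) := by
    intro c hc h1 h2
    by_cases h3 : c = b₁
    · rw [h3]
      exact Or.inr (cls_twin a.1 a.2 b₂.1 b₂.2 b₁.1 b₁.2 p o11 o12 o13 (Or.inr hord) hpb₁)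
    · exact (hcls c hc h1 h3 h2).imp id fun ⟨u, v, w, _, y⟩ => ⟨u, v, w, y⟩
  -- classification suitable for the parent swaps
  have hclsP : ∀ c ∈ R, c ≠ a →
      ((c.2 < a.1 ∨ a.2 < c.1 ∨ (c.1 < a.1 ∧ a.2 < c.2)) ∨
       (a.1 < c.1 ∧ c.2 < a.2 ∧ (c.2 < p ∨ p < c.1))) := by
    intro c hc hca
    by_cases h1 : c = b₁
    · subst h1; exact Or.inr ⟨o11, o13, hpb₁.symm⟩
    by_cases h2 : c = b₂
    · subst h2; exact Or.inr ⟨o21, o23, hpb₂.symm⟩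
    · exact (hcls c hc hca h1 h2).imp id fun ⟨u, v, w, _, _⟩ => ⟨u, v, w⟩
  -- engine: pair p with an endpoint of a child arc b
  have Echild : ∀ b : ℕ × ℕ, b ∈ R → a.1 < b.1 → b.1 < b.2 → b.2 < a.2 →
      (p < b.1 ∨ b.2 < p) →
      (∀ c ∈ R, c ≠ a → c ≠ b →
        ((c.2 < a.1 ∨ a.2 < c.1 ∨ (c.1 < a.1 ∧ a.2 < c.2)) ∨
         (a.1 < c.1 ∧ c.2 < a.2 ∧ (c.2 < p ∨ p < c.1) ∧
          (c.2 < b.1 ∨ (b.1 < c.1 ∧ c.2 < b.2) ∨ b.2 < c.1)))) →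
      ∀ q : ℕ, (q = b.1 ∨ q = b.2) → WCMatch (S p) (S q) → False := by
    intro b hbR g1 g2 g3 hpb hcl q hq hw
    refine swap1 hmax huni b (min p q, max p q) hbR ⟨?_, ?_, ?_⟩ ?_ ?_ ?_
    · dsimp; omega
    · dsimp; omega
    · dsimp; omega
    · have hpq : p ≠ q := by omega
      rcases lt_or_gt_of_ne hpq with h | h
      · dsimp only; rw [min_eq_left h.le, max_eq_right h.le]; exact hw
      · dsimp only; rw [min_eq_right h.le, max_eq_left h.le]; exact wc_symm hw
    · intro hm
      obtain ⟨u, v⟩ := hunp _ hm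
      dsimp at u v; omega
    · intro c hcR hcb
      by_cases hca : c = a
      · rw [hca]; exact okp_child_a a.1 a.2 p q b g1 g2 g3 hp₁ hp₂ hpb hq
      · exact okp_child a.1 a.2 p q b c g1 g2 g3 hp₁ hp₂ hpb hq
          (hcl c hcR hca hcb) (hunp c hcR) (hR.2.1 b hbR c hcR (Ne.symm hcb))
  -- engine: remove a and child b, add (a.1,b.1) and (b.2,a.2)
  have E2 : ∀ b : ℕ × ℕ, b ∈ R → a ≠ b → a.1 < b.1 → b.1 < b.2 → b.2 < a.2 →
      (∀ c ∈ R, c ≠ a → c ≠ b →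
        ((c.2 < a.1 ∨ a.2 < c.1 ∨ (c.1 < a.1 ∧ a.2 < c.2)) ∨
         (a.1 < c.1 ∧ c.2 < a.2 ∧ (c.2 < p ∨ p < c.1) ∧
          (c.2 < b.1 ∨ (b.1 < c.1 ∧ c.2 < b.2) ∨ b.2 < c.1)))) →
      WCMatch (S a.1) (S b.1) → WCMatch (S b.2) (S a.2) → False := by
    intro b hbR hab g1 g2 g3 hcl hw1 hw2
    have hne1 : (a.1, b.1) ≠ a := by
      intro h; have := congrArg Prod.snd h; dsimp at this; omega
    have hne2 : (b.2, a.2) ≠ a := by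
      intro h; have := congrArg Prod.fst h; dsimp at this; omega
    refine swap2 hmax huni a b (a.1, b.1) (b.2, a.2) ha hbR hab
      ⟨?_, ?_, ?_⟩ ⟨?_, ?_, ?_⟩ hw1 hw2 ?_ ?_ ?_ ?_ ?_
    · dsimp; omega
    · dsimp; omega
    · dsimp; omega
    · dsimp; omega
    · dsimp; omega
    · dsimp; omega
    · exact fun hm => (hR.2.1 a ha _ hm (Ne.symm hne1)).1 rfl
    · exact fun hm => (hR.2.1 a ha _ hm (Ne.symm hne2)).2.2.2 rfl
    · intro h; have := congrArg Prod.fst h; dsimp at this; omega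
    · exact okp_pair_E2 a b g1 g2 g3
    · intro c hcR hca hcb
      exact ⟨okp_E2a p a b c g1 g2 g3 (hcl c hcR hca hcb)
          (hR.2.1 a ha c hcR (Ne.symm hca)) (hR.2.1 b hbR c hcR (Ne.symm hcb)),
        okp_E2b p a b c g1 g2 g3 (hcl c hcR hca hcb)
          (hR.2.1 a ha c hcR (Ne.symm hca)) (hR.2.1 b hbR c hcR (Ne.symm hcb))⟩
  -- decide which rewiring applies
  have w0 := hmax.1.2 a ha
  have w1 := hmax.1.2 b₁ hb₁R
  have w2 := hmax.1.2 b₂ hb₂R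
  rcases key_base (S p) (S a.1) (S a.2) (S b₁.1) (S b₁.2) (S b₂.1) (S b₂.2) w0 w1 w2 with
    h | h | h | h | h | h | ⟨h, h'⟩ | ⟨h, h'⟩ | ⟨h, h'⟩
  · -- pair p with a.1 : new arc (a.1, p), remove a
    refine swap1 hmax huni a (a.1, p) ha ⟨?_, ?_, ?_⟩ (wc_symm h) ?_ ?_
    · dsimp; omega
    · dsimp; omega
    · dsimp; omega
    · exact fun hm => (hunp _ hm).2 rfl
    · intro c hcR hca
      exact okp_parentL p a c oa hp₁ hp₂ (hclsP c hcR hca) (hunp c hcR)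
        (hR.2.1 a ha c hcR (Ne.symm hca))
  · -- pair p with a.2 : new arc (p, a.2), remove a
    refine swap1 hmax huni a (p, a.2) ha ⟨?_, ?_, ?_⟩ h ?_ ?_
    · dsimp; omega
    · dsimp; omega
    · dsimp; omega
    · exact fun hm => (hunp _ hm).1 rfl
    · intro c hcR hca
      exact okp_parentR p a c oa hp₁ hp₂ (hclsP c hcR hca) (hunp c hcR)
        (hR.2.1 a ha c hcR (Ne.symm hca))
  · exact Echild b₁ hb₁R o11 o12 o13 hpb₁ hcls1 b₁.1 (Or.inl rfl) h
  · exact Echild b₁ hb₁R o11 o12 o13 hpb₁ hcls1 b₁.2 (Or.inr rfl) h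
  · exact Echild b₂ hb₂R o21 o22 o23 hpb₂ hcls2 b₂.1 (Or.inl rfl) h
  · exact Echild b₂ hb₂R o21 o22 o23 hpb₂ hcls2 b₂.2 (Or.inr rfl) h
  · exact E2 b₁ hb₁R hab₁ o11 o12 o13 hcls1 h h'
  · exact E2 b₂ hb₂R hab₂ o21 o22 o23 hcls2 h h'
  · -- cross swap: remove b₁, b₂, add (b₁.1, b₂.2) and (b₁.2, b₂.1)
    have hne12 : b₁ ≠ b₂ := by intro hh; rw [hh] at hord; omega
    have hne1 : (b₁.1, b₂.2) ≠ b₁ := by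
      intro hh; have := congrArg Prod.snd hh; dsimp at this; omega
    have hne2 : (b₁.2, b₂.1) ≠ b₁ := by
      intro hh; have := congrArg Prod.snd hh; dsimp at this; omega
    refine swap2 hmax huni b₁ b₂ (b₁.1, b₂.2) (b₁.2, b₂.1) hb₁R hb₂R hne12
      ⟨?_, ?_, ?_⟩ ⟨?_, ?_, ?_⟩ h h' ?_ ?_ ?_ ?_ ?_
    · dsimp; omega
    · dsimp; omega
    · dsimp; omega
    · dsimp; omega
    · dsimp; omega
    · dsimp; omega
    · exact fun hm => (hR.2.1 b₁ hb₁R _ hm (Ne.symm hne1)).1 rfl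
    · exact fun hm => (hR.2.1 b₁ hb₁R _ hm (Ne.symm hne2)).2.2.1 rfl
    · intro hh; have := congrArg Prod.fst hh; dsimp at this; omega
    · exact okp_pair_E3 b₁ b₂ o12 o22 hord
    · intro c hcR hcb1 hcb2
      by_cases hca : c = a
      · rw [hca]; exact okp_E3aa a b₁ b₂ o11 o12 o13 o21 o22 o23 hord
      · exact ⟨okp_E3a p a b₁ b₂ c o11 o12 o13 o21 o22 o23 hord
            (hcls c hcR hca hcb1 hcb2) (hR.2.1 b₁ hb₁R c hcR (Ne.symm hcb1))
            (hR.2.1 b₂ hb₂R c hcR (Ne.symm hcb2)),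
          okp_E3b p a b₁ b₂ c o11 o12 o13 o21 o22 o23 hord
            (hcls c hcR hca hcb1 hcb2) (hR.2.1 b₁ hb₁R c hcR (Ne.symm hcb1))
            (hR.2.1 b₂ hb₂R c hcR (Ne.symm hcb2))⟩

/-- If some arc `a` of a secondary structure `R` has at least two
child arcs and at least one unpaired child, then `R` is not designable under the
Watson–Crick model. -/
theorem not_designable_of_two_children_and_unpaired (m : ℕ) (R : Finset (ℕ × ℕ))
    (hR : IsSecStruct m R) (a : ℕ × ℕ) (ha : a ∈ R)
    (b₁ b₂ : ℕ × ℕ) (hne : b₁ ≠ b₂)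
    (hb₁ : IsChildArc R a b₁) (hb₂ : IsChildArc R a b₂)
    (p : ℕ) (hp₁ : a.1 < p) (hp₂ : p < a.2)
    (hunp : ∀ b ∈ R, p ≠ b.1 ∧ p ≠ b.2)
    (hnotenc : ¬∃ b ∈ R, Nested a b ∧ b.1 < p ∧ p < b.2) :
    ¬Designable m R := by
  have o12 : b₁.1 < b₁.2 := (hR.1 b₁ hb₁.1).2.1
  have o22 : b₂.1 < b₂.2 := (hR.1 b₂ hb₂.1).2.1
  have hd := hR.2.1 b₁ hb₁.1 b₂ hb₂.1 hne
  have n1 := hR.2.2 b₁ hb₁.1 b₂ hb₂.1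
  have n2 := hR.2.2 b₂ hb₂.1 b₁ hb₁.1
  have nn1 : ¬(b₁.1 < b₂.1 ∧ b₂.2 < b₁.2) := fun h => hb₂.2.2 ⟨b₁, hb₁.1, hb₁.2.1, h⟩
  have nn2 : ¬(b₂.1 < b₁.1 ∧ b₁.2 < b₂.2) := fun h => hb₁.2.2 ⟨b₂, hb₂.1, hb₂.2.1, h⟩
  have hdisj : b₁.2 < b₂.1 ∨ b₂.2 < b₁.1 := by omega
  rcases hdisj with hord | hord
  · exact aux_not_designable m R hR a ha b₁ b₂ hb₁ hb₂ hord p hp₁ hp₂ hunp hnotenc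
  · exact aux_not_designable m R hR a ha b₂ b₁ hb₂ hb₁ hord p hp₁ hp₂ hunp hnotenc
end

section
/- For every integer n ≥ 0, the RNA sequence Ŝ(n) given by the natural labelling of the saturated full binary tree of height n is a design under the Watson–Crick model, and its unique maximum-size arc set equals the secondary structure R̂(n) corresponding to that tree. -/
open Base

/-- First letter of the two-letter label of the `i`-th (0-based, left to right)
two-dot vertex at height `h`: even heights alternate `AU`/`UA`, odd heights `GC`/`CG`. -/
def pairFst (h i : ℕ) : Base :=
  if h % 2 = 0 then (if i % 2 = 0 then A else U) else (if i % 2 = 0 then G else C)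

/-- Second letter of that two-letter label. -/
def pairSnd (h i : ℕ) : Base :=
  if h % 2 = 0 then (if i % 2 = 0 then U else A) else (if i % 2 = 0 then C else G)

/-- Label of the height-`(n+1)` one-dot leaves: `A` if `n+1` is even, `C` if odd. -/
def leafBase (n : ℕ) : Base := if (n + 1) % 2 = 0 then A else C

/-- Nucleotide word of the natural labelling of the subtree of `T(n,c)` rooted at the
height-`h = n - d` vertex of left-to-right index `i`, read in traversal order. -/
def natSeqAux (c : ℕ → ℕ) (n : ℕ) : ℕ → ℕ → ℕ → List Base
  | 0, h, i => pairFst h i :: (List.replicate (c i) (leafBase n) ++ [pairSnd h i])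
  | d+1, h, i =>
      pairFst h i ::
        (natSeqAux c n d (h+1) (2*i) ++ natSeqAux c n d (h+1) (2*i+1) ++ [pairSnd h i])

/-- The word of `S(n,c)`. -/
def natSeqList (n : ℕ) (c : ℕ → ℕ) : List Base := natSeqAux c n n 0 0

/-- Length of `S(n,c)`. -/
def natLen (n : ℕ) (c : ℕ → ℕ) : ℕ := (natSeqList n c).length

/-- `S(n,c)` as a sequence on positions `1,…,natLen n c`. -/
def natSeq (n : ℕ) (c : ℕ → ℕ) (p : ℕ) : Base := (natSeqList n c).getD (p - 1) A

/-- Number of dots in the subtree rooted at the height-`(n-d)` vertex of index `i`. -/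
def natSizeAux (c : ℕ → ℕ) : ℕ → ℕ → ℕ
  | 0, i => c i + 2
  | d+1, i => 2 + natSizeAux c d (2*i) + natSizeAux c d (2*i+1)

/-- Arcs of the secondary structure of `T(n,c)` for the subtree rooted at the
height-`(n-d)` vertex of index `i`, whose first dot is at position `off`. -/
def natArcsAux (c : ℕ → ℕ) : ℕ → ℕ → ℕ → List (ℕ × ℕ)
  | 0, i, off => [(off, off + c i + 1)]
  | d+1, i, off =>
      (off, off + natSizeAux c (d+1) i - 1) ::
        (natArcsAux c d (2*i) (off + 1) ++
          natArcsAux c d (2*i+1) (off + 1 + natSizeAux c d (2*i)))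

/-- The secondary structure `R(n,c)` corresponding to `T(n,c)` (positions `1,…,m`). -/
def natStruct (n : ℕ) (c : ℕ → ℕ) : Finset (ℕ × ℕ) := (natArcsAux c n 0 1).toFinset

/-- Heights (in `T(n,c)`) of the tree vertices read at successive positions. -/
def heightSeqAux (c : ℕ → ℕ) : ℕ → ℕ → ℕ → List ℕ
  | 0, h, i => h :: (List.replicate (c i) (h+1) ++ [h])
  | d+1, h, i =>
      h :: (heightSeqAux c d (h+1) (2*i) ++ heightSeqAux c d (h+1) (2*i+1) ++ [h])

/-- The height of position `p` of `S(n,c)`. -/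
def natHeight (n : ℕ) (c : ℕ → ℕ) (p : ℕ) : ℕ := (heightSeqAux c n 0 0).getD (p - 1) 0
/-- Word of the natural labelling of the saturated full binary tree, for the subtree
rooted at the height-`h` vertex of left-to-right index `i` (`d` = remaining depth). -/
def fbSeqAux : ℕ → ℕ → ℕ → List Base
  | 0, h, i => [pairFst h i, pairSnd h i]
  | d+1, h, i =>
      pairFst h i ::
        (fbSeqAux d (h+1) (2*i) ++ fbSeqAux d (h+1) (2*i+1) ++ [pairSnd h i])

/-- The word of `Ŝ(n)`. -/
def fbSeqList (n : ℕ) : List Base := fbSeqAux n 0 0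

/-- Length of `Ŝ(n)`. -/
def fbLen (n : ℕ) : ℕ := (fbSeqList n).length

/-- `Ŝ(n)` as a sequence on positions `1,…,fbLen n`. -/
def fbSeq (n : ℕ) (p : ℕ) : Base := (fbSeqList n).getD (p - 1) A

/-- Number of dots in a full binary subtree of remaining depth `d`. -/
def fbSize : ℕ → ℕ
  | 0 => 2
  | d+1 => 2 + 2 * fbSize d

/-- Arcs of the secondary structure of the saturated full binary tree. -/
def fbArcsAux : ℕ → ℕ → List (ℕ × ℕ)
  | 0, off => [(off, off + 1)]
  | d+1, off =>
      (off, off + fbSize (d+1) - 1) ::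
        (fbArcsAux d (off + 1) ++ fbArcsAux d (off + 1 + fbSize d))

/-- The secondary structure `R̂(n)`. -/
def fbStruct (n : ℕ) : Finset (ℕ × ℕ) := (fbArcsAux n 1).toFinset

/-!
Vertex `(h, i)` of the tree (height `h`, left-to-right index `i`) carries the dots at positions
`openPos n h i` and `closePos n h i`. Its letters lie in `{A, U}` or in `{G, C}` according to the
parity of `h`, so a Watson–Crick arc only joins dots of equal height parity; and consecutive
siblings carry reversed labels, so the second dot of one cannot pair with the first dot of the next.

`R̂(n)` pairs all dots, hence is maximum, and a maximum arc set `M` is then a perfect matching.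
By induction on length, every interval perfectly matched by `M` is the span of one vertex or
of two sibling vertices: the arc of `M` at its left end encloses either nothing (a leaf) or such
a span, and the parity constraints leave only the arc of the vertex itself or of the parent of
the two siblings. So every arc of `M` is an arc of `R̂(n)`, and `M = R̂(n)` by counting.
-/

section Matchings

variable {m : ℕ} {M : Finset (ℕ × ℕ)}

def PerfectOn (M : Finset (ℕ × ℕ)) (a b : ℕ) : Prop :=
  ∀ q, a ≤ q → q ≤ b → ∃ e ∈ M, (e.1 = q ∨ e.2 = q) ∧ a ≤ e.1 ∧ e.2 ≤ b

def arcEndpoints (M : Finset (ℕ × ℕ)) : Finset ℕ := M.biUnion fun e => {e.1, e.2}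

lemma IsSecStruct.card_arcEndpoints (hM : IsSecStruct m M) :
    (arcEndpoints M).card = 2 * M.card := by
  rw [arcEndpoints, Finset.card_biUnion, Finset.sum_const_nat, mul_comm]
  · intro e he
    have := hM.1 e he
    exact Finset.card_pair (by omega)
  · intro e he f hf hef
    have := hM.2.1 e he f hf hef
    simp only [Function.onFun, Finset.disjoint_insert_left, Finset.disjoint_insert_right,
      Finset.disjoint_singleton, Finset.mem_insert, Finset.mem_singleton]
    tauto

lemma IsSecStruct.arcEndpoints_subset (hM : IsSecStruct m M) :
    arcEndpoints M ⊆ Finset.Icc 1 m := by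
  intro q hq
  obtain ⟨e, he, hq⟩ := Finset.mem_biUnion.mp hq
  have := hM.1 e he
  simp only [Finset.mem_insert, Finset.mem_singleton] at hq
  rw [Finset.mem_Icc]; omega

lemma IsSecStruct.two_mul_card_le (hM : IsSecStruct m M) : 2 * M.card ≤ m := by
  simpa [hM.card_arcEndpoints] using Finset.card_le_card hM.arcEndpoints_subset

lemma IsSecStruct.exists_mem_of_two_mul_card_eq (hM : IsSecStruct m M) (hcard : 2 * M.card = m)
    {q : ℕ} (hq1 : 1 ≤ q) (hqm : q ≤ m) : ∃ e ∈ M, e.1 = q ∨ e.2 = q := by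
  have hends : arcEndpoints M = Finset.Icc 1 m :=
    Finset.eq_of_subset_of_card_le hM.arcEndpoints_subset (by simp [hM.card_arcEndpoints, hcard])
  have : q ∈ arcEndpoints M := by rw [hends, Finset.mem_Icc]; omega
  obtain ⟨e, he, hq⟩ := Finset.mem_biUnion.mp this
  simp only [Finset.mem_insert, Finset.mem_singleton] at hq
  exact ⟨e, he, by omega⟩

lemma IsSecStruct.perfectOn_inner (hM : IsSecStruct m M) {a p : ℕ} (hap : (a, p) ∈ M)
    (hcov : ∀ q, a < q → q < p → ∃ e ∈ M, e.1 = q ∨ e.2 = q) :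
    PerfectOn M (a + 1) (p - 1) := by
  intro q hq1 hq2
  obtain ⟨e, he, heq⟩ := hcov q (by omega) (by omega)
  have hne : e ≠ (a, p) := by rintro rfl; simp only at heq; omega
  have := hM.1 e he
  have := hM.2.1 e he _ hap hne
  have := hM.2.2 e he _ hap
  have := hM.2.2 _ hap e he
  simp only at *
  exact ⟨e, he, heq, by omega, by omega⟩

lemma IsSecStruct.perfectOn_outer (hM : IsSecStruct m M) {a b p : ℕ} (hab : PerfectOn M a b)
    (hap : (a, p) ∈ M) : PerfectOn M (p + 1) b := by
  have hlt : a < p := (hM.1 _ hap).2.1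
  intro q hq1 hq2
  obtain ⟨e, he, heq, hae, heb⟩ := hab q (by omega) hq2
  have hne : e ≠ (a, p) := by rintro rfl; simp only at heq; omega
  have := hM.1 e he
  have := hM.2.1 e he _ hap hne
  have := hM.2.2 _ hap e he
  simp only at *
  exact ⟨e, he, heq, by omega, heb⟩

lemma IsSecStruct.exists_arc_of_perfectOn (hM : IsSecStruct m M) {a b : ℕ} (hab : PerfectOn M a b)
    (hle : a ≤ b) : ∃ p, (a, p) ∈ M ∧ a < p ∧ p ≤ b := by
  obtain ⟨⟨a', p⟩, he, heq, ha, hp⟩ := hab a le_rfl hle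
  have := hM.1 _ he
  simp only at *
  obtain rfl : a' = a := by omega
  exact ⟨p, he, by omega, hp⟩

end Matchings

namespace FullBinaryDesign

def isAU : Base → Bool
  | A => true | U => true | G => false | C => false

lemma not_wcMatch_self (x : Base) : ¬ WCMatch x x := by
  cases x <;> simp [WCMatch]

lemma WCMatch.isAU_eq {x y : Base} (h : WCMatch x y) : isAU x = isAU y := by
  cases x <;> cases y <;> simp_all [WCMatch, isAU]

lemma wcMatch_pairFst_pairSnd (h i : ℕ) : WCMatch (pairFst h i) (pairSnd h i) := by
  unfold pairFst pairSnd; split_ifs <;> simp [WCMatch]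

lemma pairFst_succ (h i : ℕ) : pairFst h (i + 1) = pairSnd h i := by
  unfold pairFst pairSnd; split_ifs <;> first | rfl | omega

lemma two_le_fbSize (d : ℕ) : 2 ≤ fbSize d := by
  cases d <;> simp [fbSize]

lemma fbSize_sub {n h : ℕ} (hh : h < n) : fbSize (n - h) = 2 + 2 * fbSize (n - (h + 1)) := by
  rw [show n - h = n - (h + 1) + 1 by omega, fbSize]

/-- Position of the first dot of the `i`-th vertex at height `h` in `Ŝ(n)`. -/
def openPos (n : ℕ) : ℕ → ℕ → ℕ
  | 0, _ => 1
  | h + 1, i => openPos n h (i / 2) + 1 + (i % 2) * fbSize (n - (h + 1))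

def closePos (n h i : ℕ) : ℕ := openPos n h i + fbSize (n - h) - 1

section Positions

variable {n h i j : ℕ}

@[simp] lemma openPos_zero : openPos n 0 i = 1 := rfl

lemma openPos_left_child : openPos n (h + 1) (2 * j) = openPos n h j + 1 := by
  simp [openPos]

lemma openPos_right_child :
    openPos n (h + 1) (2 * j + 1) = openPos n h j + 1 + fbSize (n - (h + 1)) := by
  simp [openPos, Nat.add_div]

lemma openPos_lt_closePos : openPos n h i < closePos n h i := by
  have := two_le_fbSize (n - h); unfold closePos; omega

lemma closePos_self : closePos n n i = openPos n n i + 1 := by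
  simp [closePos, fbSize]

lemma closePos_left_child_add_one :
    closePos n (h + 1) (2 * j) + 1 = openPos n (h + 1) (2 * j + 1) := by
  have := two_le_fbSize (n - (h + 1))
  rw [closePos, openPos_left_child, openPos_right_child]; omega

lemma closePos_right_child_add_one (hh : h < n) :
    closePos n (h + 1) (2 * j + 1) + 1 = closePos n h j := by
  have := two_le_fbSize (n - (h + 1))
  rw [closePos, closePos, openPos_right_child, fbSize_sub hh]; omega

lemma one_le_openPos_and_closePos_le (hh : h ≤ n) (hi : i < 2 ^ h) :
    1 ≤ openPos n h i ∧ closePos n h i ≤ fbSize n := by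
  induction h generalizing i with
  | zero => simp [closePos]
  | succ h ih =>
    have := two_le_fbSize (n - (h + 1))
    obtain ⟨j, rfl | rfl⟩ := Nat.even_or_odd' i <;>
    · obtain ⟨h1, h2⟩ := ih (i := j) (by omega) (by rw [pow_succ] at hi; omega)
      rw [closePos, fbSize_sub (by omega)] at h2
      simp only [closePos, openPos_left_child, openPos_right_child]; omega

lemma openPos_in_child_subtree {d e b r : ℕ} (hb : b ≤ 1) (hr : r < 2 ^ e) :
    openPos (d + 1) (e + 1) (b * 2 ^ e + r) = openPos d e r + 1 + b * fbSize d := by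
  induction e generalizing r with
  | zero => interval_cases b <;> simp_all [openPos]
  | succ e ih =>
    obtain ⟨j, rfl | rfl⟩ := Nat.even_or_odd' r
    · rw [show b * 2 ^ (e + 1) + 2 * j = 2 * (b * 2 ^ e + j) by ring, openPos_left_child,
        ih (by rw [pow_succ] at hr; omega), openPos_left_child]; ring
    · rw [show b * 2 ^ (e + 1) + (2 * j + 1) = 2 * (b * 2 ^ e + j) + 1 by ring,
        openPos_right_child, ih (by rw [pow_succ] at hr; omega),
        openPos_right_child]
      simp only [show d + 1 - (e + 1 + 1) = d - (e + 1) by omega]; ring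

end Positions

/-- The dots of the subtree rooted at the `i`-th vertex of height `h`, in traversal order:
`(true, h', i')` is the first and `(false, h', i')` the second dot of vertex `(h', i')`. -/
def tokens : ℕ → ℕ → ℕ → List (Bool × ℕ × ℕ)
  | 0, h, i => [(true, h, i), (false, h, i)]
  | d + 1, h, i =>
      (true, h, i) :: (tokens d (h + 1) (2 * i) ++ tokens d (h + 1) (2 * i + 1) ++ [(false, h, i)])

def tokenBase : Bool × ℕ × ℕ → Base
  | (b, h, i) => if b then pairFst h i else pairSnd h i

-- The default `(true, 0, 0)` has letter `A`, the default of `fbSeq`, so `fbSeq_eq_tokenBase`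
-- holds at every position.
def tokenAt (n p : ℕ) : Bool × ℕ × ℕ := (tokens n 0 0).getD (p - 1) (true, 0, 0)

section Tokens

variable {n d e h i r : ℕ}

lemma fbSeqAux_eq_map_tokens (d h i : ℕ) : fbSeqAux d h i = (tokens d h i).map tokenBase := by
  induction d generalizing h i with
  | zero => simp [fbSeqAux, tokens, tokenBase]
  | succ d ih => simp [fbSeqAux, tokens, tokenBase, ih]

@[simp] lemma length_tokens (d h i : ℕ) : (tokens d h i).length = fbSize d := by
  induction d generalizing h i with
  | zero => simp [tokens, fbSize]
  | succ d ih => simp [tokens, fbSize, ih]; ring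

lemma fbLen_eq_fbSize (n : ℕ) : fbLen n = fbSize n := by
  simp [fbLen, fbSeqList, fbSeqAux_eq_map_tokens]

lemma fbSeq_eq_tokenBase (n p : ℕ) : fbSeq n p = tokenBase (tokenAt n p) := by
  rw [fbSeq, fbSeqList, fbSeqAux_eq_map_tokens, tokenAt, show A = tokenBase (true, 0, 0) from rfl,
    List.getD_map]

lemma tokens_prefix_drop_openPos (he : e ≤ d) (hr : r < 2 ^ e) :
    tokens (d - e) (h + e) (i * 2 ^ e + r) <+: (tokens d h i).drop (openPos d e r - 1) := by
  induction d generalizing e h i r with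
  | zero =>
    obtain rfl : e = 0 := by omega
    obtain rfl : r = 0 := by simpa using hr
    simp
  | succ d ih =>
    cases e with
    | zero =>
      obtain rfl : r = 0 := by simpa using hr
      simp
    | succ e =>
      obtain ⟨b, r, hb, hr', rfl⟩ : ∃ b r', b ≤ 1 ∧ r' < 2 ^ e ∧ r = b * 2 ^ e + r' :=
        ⟨r / 2 ^ e, r % 2 ^ e,
          Nat.lt_succ_iff.mp (Nat.div_lt_of_lt_mul (by rw [pow_succ] at hr; omega)),
          Nat.mod_lt _ (by positivity), (Nat.div_add_mod' r _).symm⟩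
      have hpos := (one_le_openPos_and_closePos_le (n := d) (by omega : e ≤ d) hr').1
      have hsub : (tokens (d - e) (h + 1 + e) ((2 * i + b) * 2 ^ e + r)).length
          + (openPos d e r - 1) ≤ fbSize d := by
        have := (one_le_openPos_and_closePos_le (n := d) (by omega : e ≤ d) hr').2
        simp only [length_tokens, closePos] at this ⊢; omega
      rw [openPos_in_child_subtree hb hr', show d + 1 - (e + 1) = d - e by omega,
        show h + (e + 1) = h + 1 + e by omega,
        show i * 2 ^ (e + 1) + (b * 2 ^ e + r) = (2 * i + b) * 2 ^ e + r by ring,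
        show openPos d e r + 1 + b * fbSize d - 1 = b * fbSize d + (openPos d e r - 1) + 1 by omega,
        tokens, List.drop_succ_cons, List.append_assoc]
      have hpre := ih (h := h + 1) (i := 2 * i + b) (by omega) hr'
      interval_cases b
      · rw [zero_mul, zero_add, List.drop_append_of_le_length (by simp; omega)]
        exact hpre.trans (List.prefix_append _ _)
      · rw [one_mul, ← length_tokens d (h + 1) (2 * i), List.drop_length_add_append,
          List.drop_append_of_le_length (by simp; omega)]
        exact hpre.trans (List.prefix_append _ _)

lemma getElem_tokens_zero :
    (tokens d h i)[0]'(by simp; have := two_le_fbSize d; omega) = (true, h, i) := by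
  cases d <;> simp [tokens]

lemma getElem_tokens_last :
    (tokens d h i)[fbSize d - 1]'(by simp; have := two_le_fbSize d; omega) = (false, h, i) := by
  have hlast : (tokens d h i).getLast? = some (false, h, i) := by
    cases d <;> simp [tokens, List.getLast?_cons]
  rw [List.getLast?_eq_getElem?, length_tokens] at hlast
  exact Option.some_injective _ ((List.getElem?_eq_getElem _).symm.trans hlast)

lemma tokenAt_openPos_add {k : ℕ} (hh : h ≤ n) (hi : i < 2 ^ h) (hk : k < fbSize (n - h)) :
    tokenAt n (openPos n h i + k) = (tokens (n - h) h i)[k]'(by simpa using hk) := by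
  obtain ⟨h1, h2⟩ := one_le_openPos_and_closePos_le hh hi
  have hpre := tokens_prefix_drop_openPos (h := 0) (i := 0) hh hi
  simp only [zero_add, zero_mul] at hpre
  rw [hpre.getElem, List.getElem_drop, tokenAt, List.getD_eq_getElem]
  · congr 1; omega
  · simp only [length_tokens, closePos] at h2 ⊢; omega

lemma tokenAt_openPos (hh : h ≤ n) (hi : i < 2 ^ h) :
    tokenAt n (openPos n h i) = (true, h, i) := by
  have := two_le_fbSize (n - h)
  rw [← getElem_tokens_zero (d := n - h), ← tokenAt_openPos_add hh hi (by omega)]; rfl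

lemma tokenAt_closePos (hh : h ≤ n) (hi : i < 2 ^ h) :
    tokenAt n (closePos n h i) = (false, h, i) := by
  have := two_le_fbSize (n - h)
  rw [← getElem_tokens_last (d := n - h), ← tokenAt_openPos_add hh hi (by omega), closePos]
  congr 1; omega

lemma fbSeq_openPos (hh : h ≤ n) (hi : i < 2 ^ h) : fbSeq n (openPos n h i) = pairFst h i := by
  rw [fbSeq_eq_tokenBase, tokenAt_openPos hh hi]; rfl

lemma fbSeq_closePos (hh : h ≤ n) (hi : i < 2 ^ h) : fbSeq n (closePos n h i) = pairSnd h i := by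
  rw [fbSeq_eq_tokenBase, tokenAt_closePos hh hi]; rfl

lemma isAU_tokenBase (t : Bool × ℕ × ℕ) : isAU (tokenBase t) = decide (t.2.1 % 2 = 0) := by
  obtain ⟨_ | _, h, i⟩ := t <;> simp only [tokenBase, pairFst, pairSnd] <;> split_ifs <;>
    simp_all [isAU]

lemma not_wcMatch_tokenBase {t t' : Bool × ℕ × ℕ} (h : t.2.1 % 2 ≠ t'.2.1 % 2) :
    ¬ WCMatch (tokenBase t) (tokenBase t') := fun hw => by
  have := WCMatch.isAU_eq hw
  simp only [isAU_tokenBase, decide_eq_decide] at this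
  omega

lemma mem_tokens {t : Bool × ℕ × ℕ} (ht : t ∈ tokens d h i) :
    ∃ e ≤ d, ∃ r < 2 ^ e, t.2 = (h + e, i * 2 ^ e + r) := by
  induction d generalizing h i with
  | zero =>
    simp only [tokens, List.mem_cons, List.not_mem_nil, or_false] at ht
    rcases ht with rfl | rfl <;> exact ⟨0, le_rfl, 0, by simp⟩
  | succ d ih =>
    simp only [tokens, List.mem_cons, List.mem_append, List.not_mem_nil, or_false] at ht
    rcases ht with rfl | (ht | ht) | rfl
    · exact ⟨0, by omega, 0, by simp⟩
    · obtain ⟨e, he, r, hr, hte⟩ := ih ht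
      exact ⟨e + 1, by omega, r, by rw [pow_succ]; omega,
        by rw [hte, pow_succ]; ext <;> simp <;> ring⟩
    · obtain ⟨e, he, r, hr, hte⟩ := ih ht
      exact ⟨e + 1, by omega, 2 ^ e + r, by rw [pow_succ]; omega,
        by rw [hte, pow_succ]; ext <;> simp <;> ring⟩
    · exact ⟨0, by omega, 0, by simp⟩

lemma nodup_tokens (d h i : ℕ) : (tokens d h i).Nodup := by
  induction d generalizing h i with
  | zero => simp [tokens]
  | succ d ih =>
    have hgt : ∀ {t}, t ∈ tokens d (h + 1) (2 * i) ∨ t ∈ tokens d (h + 1) (2 * i + 1) →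
        h < t.2.1 := by
      rintro t (ht | ht) <;>
      · obtain ⟨e, -, r, -, hte⟩ := mem_tokens ht
        rw [hte]; omega
    simp only [tokens, List.nodup_cons, List.nodup_append, List.mem_append, List.mem_singleton,
      List.not_mem_nil, List.nodup_nil, not_false_eq_true, and_true, true_and, forall_eq]
    refine ⟨?_, ⟨ih _ _, ih _ _, ?_⟩,
      fun a ha hac => lt_irrefl h (by simpa [hac] using hgt ha)⟩
    · rintro (ht | ht)
      · exact lt_irrefl _ (hgt ht)
      · simp at ht
    · intro a ha b hb hab
      obtain ⟨e, -, r, hr, hae⟩ := mem_tokens ha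
      obtain ⟨e', -, r', -, hbe⟩ := mem_tokens hb
      rw [hab, hbe, Prod.mk.injEq] at hae
      obtain rfl : e' = e := by omega
      have : r = 2 ^ e' + r' := by linarith [hae.2]
      omega

lemma exists_openPos_or_closePos_eq {p : ℕ} (hp1 : 1 ≤ p) (hpn : p ≤ fbSize n) :
    ∃ h i, h ≤ n ∧ i < 2 ^ h ∧ (p = openPos n h i ∨ p = closePos n h i) := by
  have hlen : p - 1 < (tokens n 0 0).length := by simp; omega
  obtain ⟨e, he, r, hr, hte⟩ := mem_tokens (List.getElem_mem hlen)
  simp only [zero_add, zero_mul] at hte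
  have eq_of_tokenAt_eq :
      ∀ q, 1 ≤ q → q ≤ fbSize n → tokenAt n q = (tokens n 0 0)[p - 1] → p = q := by
    intro q hq1 hqn hq
    rw [tokenAt, List.getD_eq_getElem _ _ (by simp; omega),
      (nodup_tokens n 0 0).getElem_inj_iff] at hq
    omega
  obtain ⟨hF1, hL⟩ := one_le_openPos_and_closePos_le he hr
  have hFL : openPos n e r < closePos n e r := openPos_lt_closePos
  refine ⟨e, r, he, hr, ?_⟩
  cases hb : (tokens n 0 0)[p - 1].1
  · refine .inr (eq_of_tokenAt_eq _ (by omega) hL ?_)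
    rw [tokenAt_closePos he hr, ← hb, ← hte]
  · refine .inl (eq_of_tokenAt_eq _ hF1 (by omega) ?_)
    rw [tokenAt_openPos he hr, ← hb, ← hte]

end Tokens

def NestedOrDisjoint (a b : ℕ × ℕ) : Prop :=
  a.2 < b.1 ∨ b.2 < a.1 ∨ (a.1 < b.1 ∧ b.2 < a.2) ∨ (b.1 < a.1 ∧ a.2 < b.2)

instance : Std.Symm NestedOrDisjoint where
  symm _ _ h := by unfold NestedOrDisjoint at *; tauto

section CanonicalArcs

variable {n d h i off : ℕ}

lemma fbArcsAux_self : fbArcsAux (n - n) (openPos n n i) = [(openPos n n i, closePos n n i)] := by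
  rw [Nat.sub_self, closePos_self]; rfl

lemma fbArcsAux_sub_of_lt (hh : h < n) :
    fbArcsAux (n - h) (openPos n h i) = (openPos n h i, closePos n h i) ::
      (fbArcsAux (n - (h + 1)) (openPos n (h + 1) (2 * i)) ++
        fbArcsAux (n - (h + 1)) (openPos n (h + 1) (2 * i + 1))) := by
  rw [openPos_left_child, openPos_right_child, closePos,
    show n - h = n - (h + 1) + 1 by omega]
  rfl

lemma exists_vertex_of_mem_fbArcsAux {a : ℕ × ℕ} (hh : h ≤ n) (hi : i < 2 ^ h)
    (ha : a ∈ fbArcsAux (n - h) (openPos n h i)) :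
    ∃ h' i', h' ≤ n ∧ i' < 2 ^ h' ∧ a = (openPos n h' i', closePos n h' i') := by
  induction hd : n - h generalizing h i with
  | zero =>
    obtain rfl : h = n := by omega
    rw [fbArcsAux_self, List.mem_singleton] at ha
    exact ⟨h, i, hh, hi, ha⟩
  | succ d ih =>
    rw [fbArcsAux_sub_of_lt (by omega)] at ha
    have hi' : ∀ b ≤ 1, 2 * i + b < 2 ^ (h + 1) := fun b hb => by rw [pow_succ]; omega
    simp only [List.mem_cons, List.mem_append] at ha
    rcases ha with rfl | ha | ha
    · exact ⟨h, i, hh, hi, rfl⟩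
    · exact ih (by omega) (hi' 0 (by omega)) ha (by omega)
    · exact ih (by omega) (hi' 1 le_rfl) ha (by omega)

lemma fbArcsAux_subset (hh : h ≤ n) (hi : i < 2 ^ h) :
    fbArcsAux (n - h) (openPos n h i) ⊆ fbArcsAux n 1 := by
  induction h generalizing i with
  | zero => exact List.Subset.refl _
  | succ h ih =>
    obtain ⟨j, rfl | rfl⟩ := Nat.even_or_odd' i <;>
    · refine List.Subset.trans ?_ (ih (i := j) (by omega) (by rw [pow_succ] at hi; omega))
      rw [fbArcsAux_sub_of_lt (show h < n by omega)]
      intro a ha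
      simp [ha]

lemma mem_fbStruct_iff {a : ℕ × ℕ} :
    a ∈ fbStruct n ↔
      ∃ h i, h ≤ n ∧ i < 2 ^ h ∧ a = (openPos n h i, closePos n h i) := by
  rw [fbStruct, List.mem_toFinset]
  constructor
  · exact exists_vertex_of_mem_fbArcsAux (h := 0) (i := 0) (Nat.zero_le n) (by simp)
  · rintro ⟨h, i, hh, hi, rfl⟩
    apply fbArcsAux_subset hh hi
    rcases hh.lt_or_eq with hh | rfl
    · rw [fbArcsAux_sub_of_lt hh]; exact List.mem_cons_self
    · rw [fbArcsAux_self]; exact List.mem_singleton_self _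

lemma fbArcsAux_bounds {a : ℕ × ℕ} (ha : a ∈ fbArcsAux d off) :
    off ≤ a.1 ∧ a.1 < a.2 ∧ a.2 < off + fbSize d := by
  induction d generalizing off with
  | zero => simp only [fbArcsAux, List.mem_singleton] at ha; subst ha; simp [fbSize]
  | succ d ih =>
    have := two_le_fbSize d
    simp only [fbArcsAux, List.mem_cons, List.mem_append] at ha
    rcases ha with rfl | ha | ha
    · simp only [fbSize]; omega
    · have := ih ha; simp only [fbSize]; omega
    · have := ih ha; simp only [fbSize]; omega

lemma pairwise_fbArcsAux (d off : ℕ) : (fbArcsAux d off).Pairwise NestedOrDisjoint := by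
  induction d generalizing off with
  | zero => simp [fbArcsAux]
  | succ d ih =>
    have := two_le_fbSize d
    simp only [fbArcsAux, List.pairwise_cons, List.pairwise_append, List.mem_append]
    refine ⟨fun b hb => ?_, ih _, ih _, fun a ha b hb => ?_⟩
    · rcases hb with hb | hb <;>
      · have := fbArcsAux_bounds hb; simp only [NestedOrDisjoint, fbSize]; omega
    · have := fbArcsAux_bounds ha
      have := fbArcsAux_bounds hb
      simp only [NestedOrDisjoint]; omega

lemma two_mul_length_fbArcsAux (d off : ℕ) : 2 * (fbArcsAux d off).length = fbSize d := by
  induction d generalizing off with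
  | zero => rfl
  | succ d ih =>
    have h1 := ih (off + 1)
    have h2 := ih (off + 1 + fbSize d)
    simp only [fbArcsAux, List.length_cons, List.length_append, fbSize]
    omega

lemma two_mul_card_fbStruct (n : ℕ) : 2 * (fbStruct n).card = fbSize n := by
  rw [fbStruct, List.toFinset_card_of_nodup, two_mul_length_fbArcsAux]
  exact (pairwise_fbArcsAux n 1).imp_of_mem fun ha _ hab => by
    rintro rfl; have := fbArcsAux_bounds ha; simp only [NestedOrDisjoint] at hab; omega

lemma isArcSet_fbStruct (n : ℕ) : IsArcSet (fbSize n) (fbSeq n) (fbStruct n) := by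
  have hmem : ∀ {a}, a ∈ fbStruct n → a ∈ fbArcsAux n 1 := List.mem_toFinset.mp
  have hcompat :
      ∀ {a b}, a ∈ fbStruct n → b ∈ fbStruct n → a ≠ b → NestedOrDisjoint a b :=
    fun ha hb hab => (pairwise_fbArcsAux n 1).forall (hmem ha) (hmem hb) hab
  refine ⟨⟨fun a ha => ?_, fun a ha b hb hab => ?_, fun a ha b hb => ?_⟩, fun a ha => ?_⟩
  · have := fbArcsAux_bounds (hmem ha); omega
  · have := fbArcsAux_bounds (hmem ha); have := fbArcsAux_bounds (hmem hb)
    have := hcompat ha hb hab; unfold NestedOrDisjoint at this; omega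
  · rcases eq_or_ne a b with rfl | hab
    · omega
    have := fbArcsAux_bounds (hmem ha); have := fbArcsAux_bounds (hmem hb)
    have := hcompat ha hb hab; unfold NestedOrDisjoint at this; omega
  · obtain ⟨h, i, hh, hi, rfl⟩ := mem_fbStruct_iff.mp ha
    rw [fbSeq_openPos hh hi, fbSeq_closePos hh hi]
    exact wcMatch_pairFst_pairSnd h i

end CanonicalArcs

def IsVertexSpan (n a b : ℕ) : Prop :=
  ∃ h i, h ≤ n ∧ i < 2 ^ h ∧ a = openPos n h i ∧ b = closePos n h i

def IsChildrenSpan (n a b : ℕ) : Prop :=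
  ∃ h j, h < n ∧ j < 2 ^ h ∧
    a = openPos n (h + 1) (2 * j) ∧ b = closePos n (h + 1) (2 * j + 1)

section Spans

variable {n : ℕ}

lemma isVertexSpan_of_wcMatch_succ {a : ℕ} (ha : 1 ≤ a) (han : a + 1 ≤ fbSize n)
    (hw : WCMatch (fbSeq n a) (fbSeq n (a + 1))) : IsVertexSpan n a (a + 1) := by
  obtain ⟨h, i, hh, hi, rfl | rfl⟩ := exists_openPos_or_closePos_eq (n := n) ha (by omega)
  · rcases hh.lt_or_eq with hh | rfl
    · rw [← openPos_left_child, fbSeq_eq_tokenBase, fbSeq_eq_tokenBase, tokenAt_openPos hh.le hi,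
        tokenAt_openPos hh (by rw [pow_succ]; omega)] at hw
      exact absurd hw (not_wcMatch_tokenBase (by simp; omega))
    · exact ⟨h, i, le_rfl, hi, rfl, closePos_self.symm⟩
  · obtain _ | h := h
    · obtain rfl : i = 0 := by simpa using hi
      simp [closePos] at han
    obtain ⟨j, rfl | rfl⟩ := Nat.even_or_odd' i
    · rw [closePos_left_child_add_one, fbSeq_closePos hh hi,
        fbSeq_openPos hh (by rw [pow_succ] at hi ⊢; omega), pairFst_succ] at hw
      exact absurd hw (not_wcMatch_self _)
    · rw [closePos_right_child_add_one hh, fbSeq_eq_tokenBase, fbSeq_eq_tokenBase,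
        tokenAt_closePos hh hi, tokenAt_closePos (by omega) (by rw [pow_succ] at hi; omega)] at hw
      exact absurd hw (not_wcMatch_tokenBase (by simp; omega))

lemma not_wcMatch_around_vertex {h i : ℕ} (hh : h + 1 ≤ n) (hi : i < 2 ^ (h + 1)) :
    ¬ WCMatch (fbSeq n (openPos n (h + 1) i - 1)) (fbSeq n (closePos n (h + 1) i + 1)) := by
  have hj : i / 2 < 2 ^ h := by rw [pow_succ] at hi; omega
  obtain ⟨j, rfl | rfl⟩ := Nat.even_or_odd' i
  · rw [openPos_left_child, closePos_left_child_add_one, Nat.add_sub_cancel,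
      fbSeq_eq_tokenBase, fbSeq_eq_tokenBase, tokenAt_openPos (by omega) (by omega),
      tokenAt_openPos hh (by omega)]
    exact not_wcMatch_tokenBase (by simp; omega)
  · rw [← closePos_left_child_add_one, Nat.add_sub_cancel, closePos_right_child_add_one hh,
      fbSeq_eq_tokenBase, fbSeq_eq_tokenBase, tokenAt_closePos hh (by omega),
      tokenAt_closePos (by omega) (by omega)]
    exact not_wcMatch_tokenBase (by simp; omega)

lemma siblings_of_closePos_add_one_eq_openPos {h i h' i' : ℕ} (hh : h ≤ n) (hi : i < 2 ^ h)
    (hh' : h' ≤ n) (hi' : i' < 2 ^ h') (heq : closePos n h i + 1 = openPos n h' i') :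
    ∃ g j, h = g + 1 ∧ i = 2 * j ∧ h' = g + 1 ∧ i' = 2 * j + 1 := by
  have hopen := tokenAt_openPos hh' hi'
  obtain _ | g := h
  · obtain rfl : i = 0 := by simpa using hi
    have := (one_le_openPos_and_closePos_le hh' hi').2
    have := openPos_lt_closePos (n := n) (h := h') (i := i')
    simp [closePos] at heq; omega
  obtain ⟨j, rfl | rfl⟩ := Nat.even_or_odd' i
  · rw [← heq, closePos_left_child_add_one,
      tokenAt_openPos hh (by rw [pow_succ] at hi ⊢; omega), Prod.mk.injEq, Prod.mk.injEq] at hopen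
    exact ⟨g, j, rfl, rfl, hopen.2.1.symm, hopen.2.2.symm⟩
  · rw [← heq, closePos_right_child_add_one hh,
      tokenAt_closePos (by omega) (by rw [pow_succ] at hi; omega)] at hopen
    simp at hopen

end Spans

section ArcSets

variable {n : ℕ} {M : Finset (ℕ × ℕ)}

lemma isVertexSpan_of_mem (hM : IsArcSet (fbSize n) (fbSeq n) M) {a p : ℕ}
    (hap : (a, p) ∈ M)
    (hinner : p = a + 1 ∨ IsVertexSpan n (a + 1) (p - 1) ∨ IsChildrenSpan n (a + 1) (p - 1)) :
    IsVertexSpan n a p := by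
  obtain ⟨ha, hlt, hpn⟩ := hM.1.1 _ hap
  dsimp only at ha hlt hpn
  rcases hinner with rfl | ⟨h, i, hh, hi, ha', hp'⟩ | ⟨h, j, hh, hj, ha', hp'⟩
  · exact isVertexSpan_of_wcMatch_succ ha hpn (hM.2 _ hap)
  · obtain _ | h := h
    · simp at ha'; omega
    · have hw := hM.2 _ hap
      rw [show a = openPos n (h + 1) i - 1 by omega,
        show p = closePos n (h + 1) i + 1 by omega] at hw
      exact absurd hw (not_wcMatch_around_vertex hh hi)
  · refine ⟨h, j, hh.le, hj, ?_, ?_⟩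
    · rw [openPos_left_child] at ha'; omega
    · rw [← closePos_right_child_add_one hh]; omega

theorem isVertexSpan_or_isChildrenSpan_of_perfectOn (hM : IsArcSet (fbSize n) (fbSeq n) M)
    {a b : ℕ} (hab : PerfectOn M a b) (ha : 1 ≤ a) (hle : a ≤ b) (hb : b ≤ fbSize n) :
    IsVertexSpan n a b ∨ IsChildrenSpan n a b := by
  induction hd : b - a using Nat.strong_induction_on generalizing a b with
  | _ d ih =>
    obtain ⟨p, hap, hlt, hpb⟩ := hM.1.exists_arc_of_perfectOn hab hle
    have hspan : IsVertexSpan n a p := by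
      refine isVertexSpan_of_mem hM hap ?_
      rcases eq_or_ne p (a + 1) with hp | hp
      · exact .inl hp
      refine .inr (ih _ (by omega) (hM.1.perfectOn_inner hap fun q hq1 hq2 => ?_)
        (by omega) (by omega) (by omega) rfl)
      obtain ⟨e, he, heq, -⟩ := hab q (by omega) (by omega)
      exact ⟨e, he, heq⟩
    rcases eq_or_lt_of_le hpb with rfl | hpb
    · exact .inl hspan
    obtain ⟨h, i, hh, hi, rfl, rfl⟩ := hspan
    right
    rcases ih _ (by omega) (hM.1.perfectOn_outer hab hap) (by omega) hpb hb rfl with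
      ⟨h', i', hh', hi', hopen, rfl⟩ | ⟨h', j', hh', hj', hopen, rfl⟩
    · obtain ⟨g, j, rfl, rfl, rfl, rfl⟩ :=
        siblings_of_closePos_add_one_eq_openPos hh hi hh' hi' hopen
      exact ⟨g, j, by omega, by rw [pow_succ] at hi; omega, rfl, rfl⟩
    · obtain ⟨g, j, -, -, -, hodd⟩ :=
        siblings_of_closePos_add_one_eq_openPos hh hi hh' (by rw [pow_succ]; omega) hopen
      omega

lemma subset_fbStruct_of_two_mul_card_eq (hM : IsArcSet (fbSize n) (fbSeq n) M)
    (hcard : 2 * M.card = fbSize n) : M ⊆ fbStruct n := by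
  rintro ⟨a, p⟩ hap
  obtain ⟨ha, hlt, hpn⟩ := hM.1.1 _ hap
  dsimp only at ha hlt hpn
  obtain ⟨h, i, hh, hi, rfl, rfl⟩ := isVertexSpan_of_mem hM hap <| by
    rcases eq_or_ne p (a + 1) with hp | hp
    · exact .inl hp
    refine .inr (isVertexSpan_or_isChildrenSpan_of_perfectOn hM ?_ (by omega) (by omega) (by omega))
    exact hM.1.perfectOn_inner hap fun _ _ _ =>
      hM.1.exists_mem_of_two_mul_card_eq hcard (by omega) (by omega)
  exact mem_fbStruct_iff.mpr ⟨h, i, hh, hi, rfl⟩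

lemma isMaxArcSet_fbStruct (n : ℕ) : IsMaxArcSet (fbSize n) (fbSeq n) (fbStruct n) :=
  ⟨isArcSet_fbStruct n, fun R hR => by
    have := hR.1.two_mul_card_le; have := two_mul_card_fbStruct n; omega⟩

lemma eq_fbStruct_of_isMaxArcSet (hM : IsMaxArcSet (fbSize n) (fbSeq n) M) : M = fbStruct n := by
  have hle := hM.2 _ (isArcSet_fbStruct n)
  have := hM.1.1.two_mul_card_le
  have := two_mul_card_fbStruct n
  exact Finset.eq_of_subset_of_card_le (subset_fbStruct_of_two_mul_card_eq hM.1 (by omega)) hle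

end ArcSets

end FullBinaryDesign

/-- For every `n ≥ 0`, the natural labelling `Ŝ(n)` of the saturated
full binary tree of height `n` is a design, and its unique maximum-size arc set equals
the corresponding secondary structure `R̂(n)`. -/
theorem full_binary_is_design (n : ℕ) :
    IsDesign (fbLen n) (fbSeq n) ∧
    IsMaxArcSet (fbLen n) (fbSeq n) (fbStruct n) ∧
    ∀ R' : Finset (ℕ × ℕ), IsMaxArcSet (fbLen n) (fbSeq n) R' → R' = fbStruct n := by
  rw [FullBinaryDesign.fbLen_eq_fbSize]
  have hmax := FullBinaryDesign.isMaxArcSet_fbStruct n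
  have huniq : ∀ R, _ → R = fbStruct n := fun _ =>
    FullBinaryDesign.eq_fbStruct_of_isMaxArcSet
  exact ⟨⟨fbStruct n, hmax, huniq⟩, hmax, huniq⟩
end

section
/- Let S be an RNA sequence and let X ∈ {A, C}. Suppose S admits an arc set (under the Watson–Crick model) in which every position that is not an endpoint of an arc is labelled X. Then in every maximum-size arc set for S under the Watson–Crick model, every position whose label is different from X is an endpoint of an arc. -/
open Base

namespace RNAaux

/-- The Watson–Crick partner of a base. -/
def partner : Base → Base
  | Base.A => Base.U
  | Base.U => Base.A
  | Base.G => Base.C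
  | Base.C => Base.G

lemma wc_iff : ∀ x y : Base, WCMatch x y ↔ y = partner x := by
  intro x y; cases x <;> cases y <;> simp [WCMatch, partner]

lemma partner_ne : ∀ b : Base, partner b ≠ b := by
  intro b; cases b <;> simp [partner]

lemma partner_partner : ∀ b : Base, partner (partner b) = b := by
  intro b; cases b <;> rfl

lemma partner_inj : ∀ x y : Base, partner x = partner y → x = y := by
  intro x y; cases x <;> cases y <;> simp [partner]

/-- Positions in `{1,…,m}` carrying base `b`. -/
def Pb (m : ℕ) (S : ℕ → Base) (b : Base) : Finset ℕ :=
  (Finset.Icc 1 m).filter (fun p => S p = b)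

/-- Positions in `{1,…,m}` carrying base `b` that are paired in `R`. -/
def PPb (m : ℕ) (S : ℕ → Base) (b : Base) (R : Finset (ℕ × ℕ)) : Finset ℕ :=
  (Pb m S b).filter (fun p => ∃ a ∈ R, p = a.1 ∨ p = a.2)

/-- Arcs of `R` having an endpoint of base `b`. -/
def Rb (S : ℕ → Base) (R : Finset (ℕ × ℕ)) (b : Base) : Finset (ℕ × ℕ) :=
  R.filter (fun a => S a.1 = b ∨ S a.2 = b)

lemma card_Rb (m : ℕ) (S : ℕ → Base) (R : Finset (ℕ × ℕ)) (hR : IsArcSet m S R)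
    (b : Base) : (Rb S R b).card = (PPb m S b R).card := by
  apply Finset.card_bij (fun a _ => if S a.1 = b then a.1 else a.2)
  · intro a ha
    simp only [Rb, Finset.mem_filter] at ha
    obtain ⟨haR, hab⟩ := ha
    obtain ⟨h1, h2, h3⟩ := hR.1.1 a haR
    simp only [PPb, Pb, Finset.mem_filter, Finset.mem_Icc]
    split_ifs with hb
    · exact ⟨⟨⟨h1, le_trans (le_of_lt h2) h3⟩, hb⟩, a, haR, Or.inl rfl⟩
    · have hb2 : S a.2 = b := hab.resolve_left hb
      exact ⟨⟨⟨le_trans h1 (le_of_lt h2), h3⟩, hb2⟩, a, haR, Or.inr rfl⟩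
  · intro a ha a' ha' hij
    simp only [Rb, Finset.mem_filter] at ha ha'
    by_contra hne
    obtain ⟨d1, d2, d3, d4⟩ := hR.1.2.1 a ha.1 a' ha'.1 hne
    split_ifs at hij <;> simp_all
  · intro p hp
    simp only [PPb, Pb, Finset.mem_filter, Finset.mem_Icc] at hp
    obtain ⟨⟨hpm, hpb⟩, a, haR, hpa⟩ := hp
    have hwc : S a.2 = partner (S a.1) := (wc_iff _ _).mp (hR.2 a haR)
    have hmem : a ∈ Rb S R b := by
      simp only [Rb, Finset.mem_filter]
      rcases hpa with h | h <;> subst h <;> exact ⟨haR, by tauto⟩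
    refine ⟨a, hmem, ?_⟩
    rcases hpa with h | h
    · subst h; simp [hpb]
    · subst h
      have hne1 : S a.1 ≠ b := by
        intro hc
        rw [hc, hpb] at hwc
        exact partner_ne b hwc.symm
      simp [hne1]

lemma Rb_partner (m : ℕ) (S : ℕ → Base) (R : Finset (ℕ × ℕ)) (hR : IsArcSet m S R)
    (b : Base) : Rb S R (partner b) = Rb S R b := by
  unfold Rb
  apply Finset.filter_congr
  intro a ha
  have hwc : S a.2 = partner (S a.1) := (wc_iff _ _).mp (hR.2 a ha)
  constructor
  · rintro (h | h)
    · exact Or.inr (by rw [hwc, h, partner_partner])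
    · exact Or.inl (partner_inj _ _ (by rw [← hwc, h]))
  · rintro (h | h)
    · exact Or.inr (by rw [hwc, h])
    · exact Or.inl (by rw [← partner_partner (S a.1), ← hwc, h])

lemma card_split (m : ℕ) (S : ℕ → Base) (R : Finset (ℕ × ℕ)) (hR : IsArcSet m S R)
    (X Z : Base)
    (hsp : ∀ x : Base, ¬(x = X ∨ partner x = X) ↔ (x = Z ∨ partner x = Z)) :
    R.card = (Rb S R X).card + (Rb S R Z).card := by
  have hEq : R.filter (fun a => ¬(S a.1 = X ∨ S a.2 = X)) = Rb S R Z := by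
    unfold Rb
    apply Finset.filter_congr
    intro a ha
    have hwc : S a.2 = partner (S a.1) := (wc_iff _ _).mp (hR.2 a ha)
    rw [hwc]
    exact hsp (S a.1)
  rw [← Finset.card_filter_add_card_filter_not
      (p := fun a => S a.1 = X ∨ S a.2 = X) (s := R), hEq]
  rfl

lemma main_aux (m : ℕ) (S : ℕ → Base) (X Z : Base)
    (hsp : ∀ x : Base, ¬(x = X ∨ partner x = X) ↔ (x = Z ∨ partner x = Z))
    (R₀ : Finset (ℕ × ℕ)) (hR₀ : IsArcSet m S R₀)
    (hcov : ∀ p, 1 ≤ p → p ≤ m → (∀ a ∈ R₀, p ≠ a.1 ∧ p ≠ a.2) → S p = X)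
    (M : Finset (ℕ × ℕ)) (hM : IsMaxArcSet m S M) :
    ∀ p, 1 ≤ p → p ≤ m → S p ≠ X → ∃ a ∈ M, p = a.1 ∨ p = a.2 := by
  set Y := partner X with hY
  set W := partner Z with hW
  -- every position of base ≠ X is paired in R₀
  have covEq : ∀ b : Base, b ≠ X → PPb m S b R₀ = Pb m S b := by
    intro b hb
    apply Finset.Subset.antisymm (Finset.filter_subset _ _)
    intro p hp
    simp only [Pb, Finset.mem_filter, Finset.mem_Icc] at hp
    simp only [PPb, Pb, Finset.mem_filter, Finset.mem_Icc]
    refine ⟨hp, ?_⟩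
    by_contra hc
    push_neg at hc
    have : S p = X := hcov p hp.1.1 hp.1.2 (fun a ha => ⟨(hc a ha).1, (hc a ha).2⟩)
    rw [hp.2] at this
    exact hb this
  have hYX : Y ≠ X := partner_ne X
  have hZX : Z ≠ X := by
    have := (hsp X).mpr
    intro hc; exact (this (Or.inl hc.symm)) (Or.inl rfl)
  have hWX : W ≠ X := by
    have := (hsp W).mpr (Or.inr (by rw [hW, partner_partner]))
    intro hc; exact this (Or.inl hc)
  -- counts in R₀
  have c1 : (Rb S R₀ X).card = (Pb m S Y).card := by
    rw [← Rb_partner m S R₀ hR₀ X, ← hY, card_Rb m S R₀ hR₀ Y, covEq Y hYX]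
  have c2 : (Rb S R₀ Z).card = (Pb m S Z).card := by
    rw [card_Rb m S R₀ hR₀ Z, covEq Z hZX]
  have cR₀ : R₀.card = (Pb m S Y).card + (Pb m S Z).card := by
    rw [card_split m S R₀ hR₀ X Z hsp, c1, c2]
  have cW : (Pb m S W).card = (Pb m S Z).card := by
    rw [← covEq W hWX, ← card_Rb m S R₀ hR₀ W, hW, Rb_partner m S R₀ hR₀ Z, c2]
  -- counts in M
  have d1 : (Rb S M X).card = (PPb m S Y M).card := by
    rw [← Rb_partner m S M hM.1 X, ← hY, card_Rb m S M hM.1 Y]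
  have d2 : (Rb S M Z).card = (PPb m S Z M).card := by
    rw [card_Rb m S M hM.1 Z]
  have cM : M.card = (PPb m S Y M).card + (PPb m S Z M).card := by
    rw [card_split m S M hM.1 X Z hsp, d1, d2]
  have subY : PPb m S Y M ⊆ Pb m S Y := Finset.filter_subset _ _
  have subZ : PPb m S Z M ⊆ Pb m S Z := Finset.filter_subset _ _
  have subW : PPb m S W M ⊆ Pb m S W := Finset.filter_subset _ _
  have leY := Finset.card_le_card subY
  have leZ := Finset.card_le_card subZ
  have hge : R₀.card ≤ M.card := hM.2 R₀ hR₀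
  have eqYc : (PPb m S Y M).card = (Pb m S Y).card := by omega
  have eqZc : (PPb m S Z M).card = (Pb m S Z).card := by omega
  have eqY : PPb m S Y M = Pb m S Y :=
    Finset.eq_of_subset_of_card_le subY (le_of_eq eqYc.symm)
  have eqZ : PPb m S Z M = Pb m S Z :=
    Finset.eq_of_subset_of_card_le subZ (le_of_eq eqZc.symm)
  have eqWc : (PPb m S W M).card = (Pb m S W).card := by
    rw [← card_Rb m S M hM.1 W, hW, Rb_partner m S M hM.1 Z, d2, eqZc, cW]
  have eqW : PPb m S W M = Pb m S W :=
    Finset.eq_of_subset_of_card_le subW (le_of_eq eqWc.symm)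
  -- conclusion
  intro p h1 h2 hne
  have hbase : S p = Y ∨ S p = Z ∨ S p = W := by
    by_cases hc : S p = Z ∨ partner (S p) = Z
    · rcases hc with hc | hc
      · exact Or.inr (Or.inl hc)
      · refine Or.inr (Or.inr ?_)
        rw [hW, ← hc, partner_partner]
    · have hx : S p = X ∨ partner (S p) = X := by
        by_contra hnx
        exact hc ((hsp (S p)).mp hnx)
      rcases hx with hx | hx
      · exact absurd hx hne
      · exact Or.inl (by rw [hY, ← hx, partner_partner])
  have hp : p ∈ PPb m S (S p) M := by
    rcases hbase with hb | hb | hb <;> rw [hb]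
    · rw [eqY]; simp [Pb, Finset.mem_Icc, h1, h2, hb]
    · rw [eqZ]; simp [Pb, Finset.mem_Icc, h1, h2, hb]
    · rw [eqW]; simp [Pb, Finset.mem_Icc, h1, h2, hb]
  simp only [PPb, Finset.mem_filter] at hp
  exact hp.2

end RNAaux

/-- Let `X ∈ {A,C}`.  If `S` admits an arc set in which every
unpaired position is labelled `X`, then in every maximum-size arc set for `S` every
position labelled differently from `X` is an endpoint of an arc. -/
theorem non_X_paired_in_max (m : ℕ) (S : ℕ → Base) (X : Base) (hX : X = A ∨ X = C)
    (h : ∃ R₀ : Finset (ℕ × ℕ), IsArcSet m S R₀ ∧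
      ∀ p, 1 ≤ p → p ≤ m → (∀ a ∈ R₀, p ≠ a.1 ∧ p ≠ a.2) → S p = X)
    (M : Finset (ℕ × ℕ)) (hM : IsMaxArcSet m S M) :
    ∀ p, 1 ≤ p → p ≤ m → S p ≠ X → ∃ a ∈ M, p = a.1 ∨ p = a.2 := by
  obtain ⟨R₀, hR₀, hcov⟩ := h
  rcases hX with rfl | rfl
  · exact RNAaux.main_aux m S A G (by intro x; cases x <;> simp [RNAaux.partner]) R₀ hR₀ hcov M hM
  · exact RNAaux.main_aux m S C A (by intro x; cases x <;> simp [RNAaux.partner]) R₀ hR₀ hcov M hM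
end

section
/- Let S be an RNA sequence, let {X,Y} be either {G,C} or {A,U}, and let M be an arc set for S under the Watson–Crick model. Let B be a set of positions, each labelled X or Y, such that every position in B is joined by an arc of M to another position in B. Then for every arc {i,j} of M with i ∉ B and j ∉ B, the number of positions p ∈ B with i < p < j and S(p) = X equals the number of positions p ∈ B with i < p < j and S(p) = Y; equivalently, two positions outside B whose running differences with respect to B are unequal cannot be joined by an arc of M. -/
open Base

/-- Let `{X,Y}` be `{G,C}` or `{A,U}`, `M` an arc set for `S`, and
`B` a set of positions each labelled `X` or `Y` such that every position of `B` is
joined by an arc of `M` to another position of `B`.  Then every arc of `M` with both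
endpoints outside `B` encloses equally many `X`-positions and `Y`-positions of `B`. -/
theorem arc_encloses_balanced (m : ℕ) (S : ℕ → Base) (X Y : Base)
    (hXY : (X = G ∧ Y = C) ∨ (X = C ∧ Y = G) ∨ (X = A ∧ Y = U) ∨ (X = U ∧ Y = A))
    (M : Finset (ℕ × ℕ)) (hM : IsArcSet m S M)
    (B : Finset ℕ)
    (hBlab : ∀ p ∈ B, S p = X ∨ S p = Y)
    (hBpair : ∀ p ∈ B, ∃ a ∈ M, (a.1 = p ∧ a.2 ∈ B) ∨ (a.2 = p ∧ a.1 ∈ B)) :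
    ∀ a ∈ M, a.1 ∉ B → a.2 ∉ B →
      (B.filter (fun p => a.1 < p ∧ p < a.2 ∧ S p = X)).card =
        (B.filter (fun p => a.1 < p ∧ p < a.2 ∧ S p = Y)).card := by

  classical
  obtain ⟨⟨hrange, hend, hcross⟩, hwc⟩ := hM
  -- uniqueness of arc at a point
  have uniq : ∀ p : ℕ, ∀ b ∈ M, ∀ c ∈ M, (b.1 = p ∨ b.2 = p) → (c.1 = p ∨ c.2 = p) →
      b = c := by
    intro p b hb c hc hbp hcp
    by_contra hne
    obtain ⟨h1, h2, h3, h4⟩ := hend b hb c hc hne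
    rcases hbp with hb1 | hb2 <;> rcases hcp with hc1 | hc2 <;> omega
  have key : ∀ p ∈ B, ∃ q, q ∈ B ∧ ((p, q) ∈ M ∨ (q, p) ∈ M) := by
    intro p hp
    obtain ⟨a', ha', h⟩ := hBpair p hp
    rcases h with ⟨h1, h2⟩ | ⟨h1, h2⟩
    · exact ⟨a'.2, h2, Or.inl (by rw [← h1]; exact ha')⟩
    · exact ⟨a'.1, h2, Or.inr (by rw [← h1]; exact ha')⟩
  set f : ℕ → ℕ := fun p =>
    if h : ∃ q, q ∈ B ∧ ((p, q) ∈ M ∨ (q, p) ∈ M) then h.choose else 0 with hf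
  have hfB : ∀ p ∈ B, f p ∈ B ∧ ((p, f p) ∈ M ∨ (f p, p) ∈ M) := by
    intro p hp
    have h := key p hp
    simp only [hf, dif_pos h]
    exact h.choose_spec
  -- any arc-partner of p equals f p
  have hfuniq : ∀ p ∈ B, ∀ q, ((p, q) ∈ M ∨ (q, p) ∈ M) → q = f p := by
    intro p hp q hq
    obtain ⟨_, hq'⟩ := hfB p hp
    rcases hq with h1 | h1 <;> rcases hq' with h2 | h2
    · have := uniq p (p, q) h1 (p, f p) h2 (Or.inl rfl) (Or.inl rfl)
      exact (Prod.mk.injEq _ _ _ _ ▸ this).2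
    · have := uniq p (p, q) h1 (f p, p) h2 (Or.inl rfl) (Or.inr rfl)
      have h3 := (Prod.mk.injEq _ _ _ _ ▸ this)
      omega
    · have := uniq p (q, p) h1 (p, f p) h2 (Or.inr rfl) (Or.inl rfl)
      have h3 := (Prod.mk.injEq _ _ _ _ ▸ this)
      omega
    · have := uniq p (q, p) h1 (f p, p) h2 (Or.inr rfl) (Or.inr rfl)
      exact (Prod.mk.injEq _ _ _ _ ▸ this).1
  have hinv : ∀ p ∈ B, f (f p) = p := by
    intro p hp
    obtain ⟨hfpB, harc⟩ := hfB p hp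
    exact (hfuniq (f p) hfpB p (harc.symm.imp id id)).symm
  have hlab : ∀ p ∈ B, (S p = X → S (f p) = Y) ∧ (S p = Y → S (f p) = X) := by
    intro p hp
    obtain ⟨hfpB, harc⟩ := hfB p hp
    have hm : WCMatch (S p) (S (f p)) := by
      rcases harc with h | h
      · exact hwc _ h
      · have := hwc _ h
        rcases this with ⟨h1, h2⟩ | ⟨h1, h2⟩ | ⟨h1, h2⟩ | ⟨h1, h2⟩ <;>
          simp [WCMatch, h1, h2]
    have hfl := hBlab (f p) hfpB
    have hne : S p ≠ S (f p) := by
      intro h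
      rw [h] at hm
      rcases hm with ⟨h1, h2⟩ | ⟨h1, h2⟩ | ⟨h1, h2⟩ | ⟨h1, h2⟩ <;>
        rw [h1] at h2 <;> exact absurd h2 (by decide)
    constructor <;> intro hh <;> rcases hfl with h | h
    · exact absurd (hh.trans h.symm) hne
    · exact h
    · exact h
    · exact absurd (hh.trans h.symm) hne
  intro a ha ha1 ha2
  have hinside : ∀ p ∈ B, a.1 < p → p < a.2 → a.1 < f p ∧ f p < a.2 := by
    intro p hp hp1 hp2
    obtain ⟨hfpB, harc⟩ := hfB p hp
    rcases harc with h | h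
    · have hne : (p, f p) ≠ a := by
        intro he; apply ha1; rw [← he]; exact hp
      obtain ⟨e1, e2, e3, e4⟩ := hend (p, f p) h a ha hne
      have hlt : p < f p := (hrange _ h).2.1
      have hnc := hcross a ha (p, f p) h
      simp only at hnc e1 e2 e3 e4
      omega
    · have hne : (f p, p) ≠ a := by
        intro he; apply ha2; rw [← he]; exact hp
      obtain ⟨e1, e2, e3, e4⟩ := hend (f p, p) h a ha hne
      have hlt : f p < p := (hrange _ h).2.1
      have hnc := hcross (f p, p) h a ha
      simp only at hnc e1 e2 e3 e4
      omega
  apply Finset.card_bij' (fun p _ => f p) (fun p _ => f p)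
  · intro p hp
    simp only [Finset.mem_filter] at hp ⊢
    obtain ⟨hpB, h1, h2, h3⟩ := hp
    obtain ⟨hfpB, _⟩ := hfB p hpB
    have hin := hinside p hpB h1 h2
    exact ⟨hfpB, hin.1, hin.2, (hlab p hpB).1 h3⟩
  · intro p hp
    simp only [Finset.mem_filter] at hp ⊢
    obtain ⟨hpB, h1, h2, h3⟩ := hp
    obtain ⟨hfpB, _⟩ := hfB p hpB
    have hin := hinside p hpB h1 h2
    exact ⟨hfpB, hin.1, hin.2, (hlab p hpB).2 h3⟩
  · intro p hp
    simp only [Finset.mem_filter] at hp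
    exact hinv p hp.1
  · intro p hp
    simp only [Finset.mem_filter] at hp
    exact hinv p hp.1
end
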